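/- arXiv:2305.09377 — 9 statements merged into one kernel-verified Lean document; each statement's English description precedes it below -/
import Mathlib

section
/- The minimum value of the major index over all standard Young tableaux of shape λ ⊢ n equals b(λ) = ∑_{i ≥ 1} (i−1)·λ_i (rows indexed from 1). -/
/-- A standard Young tableau of shape `μ`: a filling of the cells of `μ`
by `1,…,n` (each exactly once, `n = μ.card`), strictly increasing along
rows and columns. -/
structure SYT (μ : YoungDiagram) where
  entry : ℕ × ℕ → ℕ
  mapsTo : ∀ c ∈ μ.cells, entry c ∈ Finset.Icc 1 μ.card
  injOn : ∀ c ∈ μ.cells, ∀ d ∈ μ.cells, entry c = entry d → c = d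
  surjOn : ∀ v ∈ Finset.Icc 1 μ.card, ∃ c ∈ μ.cells, entry c = v
  row_lt : ∀ {i j1 j2 : ℕ}, j1 < j2 → (i, j2) ∈ μ → entry (i, j1) < entry (i, j2)
  col_lt : ∀ {i1 i2 j : ℕ}, i1 < i2 → (i2, j) ∈ μ → entry (i1, j) < entry (i2, j)

/-- `i` is a descent of the tableau `T`: the entry `i+1` lies in a strictly
lower row than the entry `i`. -/
def SYT.des {μ : YoungDiagram} (T : SYT μ) (i : ℕ) : Prop :=
  ∃ c ∈ μ.cells, ∃ d ∈ μ.cells, T.entry c = i ∧ T.entry d = i + 1 ∧ c.1 < d.1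

open scoped Classical in
/-- The major index of a standard Young tableau: the sum of its descents. -/
noncomputable def SYT.maj {μ : YoungDiagram} (T : SYT μ) : ℕ :=
  ∑ i ∈ Finset.range μ.card, if T.des i then i else 0

/-- `bstat μ = ∑ (i-1) μ_i` (rows 1-indexed), i.e. `∑ i * μ.rowLen i` with rows 0-indexed. -/
def bstat (μ : YoungDiagram) : ℕ :=
  ∑ i ∈ Finset.range μ.card, i * μ.rowLen i

/-- The number of columns of `μ` of odd length. -/
def oddCols (μ : YoungDiagram) : ℕ :=
  ((Finset.range μ.card).filter fun j => Odd (μ.colLen j)).card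

/-!
Counting the pairs (cell `p`, descent `d`) with `T.entry p ≤ d` in two ways gives
`maj T = ∑ p, #{descents d ≥ T.entry p}`. Between the entries of a cell and of the cell below it
there is always a descent, so at least `legLen p` descents (the number of cells below `p` in its
column) come after `T.entry p`; turning every column upside down shows `∑ p, legLen p = b(λ)`.
Conversely, align the columns at the bottom and fill the rows so obtained from the top, each from
left to right: along consecutive entries of this tableau the leg length never increases and drops
at every descent, so exactly `legLen p` descents come after each cell.
-/

open Finset YoungDiagram

namespace Finset

variable {α β : Type*} [LinearOrder β] (s : Finset α) (f : α → β)

def rankBy (a : α) : ℕ := #{b ∈ s | f b ≤ f a}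

variable {s f} {a b : α}

lemma rankBy_le_rankBy (h : f a ≤ f b) : s.rankBy f a ≤ s.rankBy f b :=
  card_le_card <| monotone_filter_right s fun _ _ hc => hc.trans h

lemma rankBy_lt_rankBy (hb : b ∈ s) (h : f a < f b) : s.rankBy f a < s.rankBy f b := by
  have hsub : {c ∈ s | f c ≤ f a} ⊆ {c ∈ s | f c ≤ f b} :=
    monotone_filter_right s fun _ _ hc => hc.trans h.le
  refine card_lt_card <| (ssubset_iff_of_subset hsub).2 ?_
  exact ⟨b, mem_filter.2 ⟨hb, le_rfl⟩, fun hb' => (mem_filter.1 hb').2.not_gt h⟩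

lemma lt_of_rankBy_lt (h : s.rankBy f a < s.rankBy f b) : f a < f b :=
  lt_of_not_ge fun h' => (rankBy_le_rankBy h').not_gt h

lemma rankBy_mem_Icc (ha : a ∈ s) : s.rankBy f a ∈ Icc 1 #s :=
  mem_Icc.2 ⟨card_pos.2 ⟨a, mem_filter.2 ⟨ha, le_rfl⟩⟩, card_filter_le _ _⟩

lemma injOn_rankBy (hf : Set.InjOn f s) : Set.InjOn (s.rankBy f) s := by
  intro a ha b hb hab
  refine hf ha hb (le_antisymm ?_ ?_) <;> refine le_of_not_gt fun h => ?_
  · exact (rankBy_lt_rankBy ha h).ne' hab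
  · exact (rankBy_lt_rankBy hb h).ne hab

lemma surjOn_rankBy (hf : Set.InjOn f s) : Set.SurjOn (s.rankBy f) s (Icc 1 #s) :=
  surjOn_of_injOn_of_card_le _ (fun _ => rankBy_mem_Icc) (injOn_rankBy hf) (by simp)

end Finset

namespace YoungDiagram

variable {μ : YoungDiagram}

def legLen (μ : YoungDiagram) (p : ℕ × ℕ) : ℕ := μ.colLen p.2 - p.1 - 1

lemma fst_lt_card {p : ℕ × ℕ} (hp : p ∈ μ) : p.1 < μ.card := by
  have hsub : (range (p.1 + 1)).image (fun i => (i, p.2)) ⊆ μ.cells := by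
    simp only [subset_iff, mem_image, mem_range, mem_cells]
    rintro _ ⟨i, hi, rfl⟩
    exact μ.up_left_mem (Nat.lt_succ_iff.1 hi) le_rfl hp
  have := card_le_card hsub
  rw [card_image_of_injective _ fun i j h => (Prod.ext_iff.1 h).1, card_range] at this
  exact this

lemma sum_fst_cells_eq_bstat : ∑ p ∈ μ.cells, p.1 = bstat μ := by
  rw [bstat, ← sum_fiberwise_of_maps_to (g := Prod.fst)
    fun p hp => mem_range.2 (fst_lt_card ((mem_cells p).1 hp))]
  refine sum_congr rfl fun i _ => ?_
  rw [sum_congr rfl fun p hp => (mem_filter.1 hp).2, sum_const, smul_eq_mul, mul_comm,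
    rowLen_eq_card]
  rfl

lemma mk_legLen_mem {p : ℕ × ℕ} (hp : p ∈ μ) : (μ.legLen p, p.2) ∈ μ := by
  have := mem_iff_lt_colLen.1 hp
  exact mem_iff_lt_colLen.2 (by unfold legLen; omega)

lemma legLen_mk_legLen {p : ℕ × ℕ} (hp : p ∈ μ) : μ.legLen (μ.legLen p, p.2) = p.1 := by
  have := mem_iff_lt_colLen.1 hp
  simp only [legLen]
  omega

lemma sum_legLen_eq_bstat : ∑ p ∈ μ.cells, μ.legLen p = bstat μ := by
  rw [← sum_fst_cells_eq_bstat]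
  have hinv (p : ℕ × ℕ) (hp : p ∈ μ.cells) : (μ.legLen (μ.legLen p, p.2), p.2) = p :=
    Prod.ext (legLen_mk_legLen ((mem_cells p).1 hp)) rfl
  exact sum_nbij' (fun p => (μ.legLen p, p.2)) (fun p => (μ.legLen p, p.2))
    (fun p hp => (mem_cells _).2 (mk_legLen_mem ((mem_cells p).1 hp)))
    (fun p hp => (mem_cells _).2 (mk_legLen_mem ((mem_cells p).1 hp))) hinv hinv fun _ _ => rfl

end YoungDiagram

lemma card_filter_le_lt_card_filter_le {D : Finset ℕ} {a b d : ℕ} (hd : d ∈ D) (had : a ≤ d)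
    (hdb : d < b) : #{x ∈ D | b ≤ x} < #{x ∈ D | a ≤ x} := by
  refine card_lt_card <| (ssubset_iff_of_subset <| monotone_filter_right D fun _ _ hx => ?_).2 ?_
  · omega
  · exact ⟨d, mem_filter.2 ⟨hd, had⟩, fun h => (mem_filter.1 h).2.not_gt hdb⟩

lemma card_filter_le_le_card_filter_succ_le_add_one (D : Finset ℕ) (a : ℕ) :
    #{x ∈ D | a ≤ x} ≤ #{x ∈ D | a + 1 ≤ x} + 1 := by
  refine (card_le_card fun x hx => ?_).trans (card_insert_le a _)
  obtain ⟨hxD, hax⟩ := mem_filter.1 hx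
  rcases hax.eq_or_lt with rfl | hax
  · exact mem_insert_self _ _
  · exact mem_insert_of_mem (mem_filter.2 ⟨hxD, hax⟩)

lemma filter_le_eq_filter_succ_le {D : Finset ℕ} {a : ℕ} (ha : a ∉ D) :
    {x ∈ D | a ≤ x} = {x ∈ D | a + 1 ≤ x} :=
  filter_congr fun x hx =>
    ⟨fun h => Nat.lt_of_le_of_ne h (by rintro rfl; exact ha hx), Nat.le_of_succ_le⟩

namespace SYT

variable {μ : YoungDiagram} (T : SYT μ)

open scoped Classical in
noncomputable def descents : Finset ℕ := {i ∈ range μ.card | T.des i}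

variable {T}

lemma mem_descents {d : ℕ} : d ∈ T.descents ↔ d < μ.card ∧ T.des d := by
  classical
  simp [descents]

variable (T)

open scoped Classical in
lemma maj_eq_sum_descents : T.maj = ∑ d ∈ T.descents, d := (sum_filter _ _).symm

lemma card_filter_entry_le {d : ℕ} (hd : d ≤ μ.card) :
    #{p ∈ μ.cells | T.entry p ≤ d} = d := by
  refine (card_nbij T.entry (fun p hp => ?_) (fun p hp q hq => ?_) (fun v hv => ?_)).trans
    (Nat.card_Icc 1 d)
  · obtain ⟨hp, hpd⟩ := mem_filter.1 hp
    exact mem_Icc.2 ⟨(mem_Icc.1 (T.mapsTo p hp)).1, hpd⟩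
  · exact T.injOn p (mem_filter.1 hp).1 q (mem_filter.1 hq).1
  · obtain ⟨h1, h2⟩ := mem_Icc.1 hv
    obtain ⟨p, hp, rfl⟩ := T.surjOn v (mem_Icc.2 ⟨h1, h2.trans hd⟩)
    exact ⟨p, mem_filter.2 ⟨hp, h2⟩, rfl⟩

lemma maj_eq_sum_card_descents_ge :
    T.maj = ∑ p ∈ μ.cells, #{d ∈ T.descents | T.entry p ≤ d} := by
  rw [maj_eq_sum_descents]
  refine Eq.trans ?_
    (sum_card_bipartiteAbove_eq_sum_card_bipartiteBelow (fun p d => T.entry p ≤ d)).symm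
  exact sum_congr rfl fun d hd => (T.card_filter_entry_le (mem_descents.1 hd).1.le).symm

/-- Walking through the entries from `T.entry p` to `T.entry q`, the row index has to increase at
some step. -/
lemma exists_des_mem_Ico {p q : ℕ × ℕ} (hp : p ∈ μ.cells) (hq : q ∈ μ.cells)
    (hrow : p.1 < q.1) (hlt : T.entry p < T.entry q) :
    ∃ d, T.des d ∧ T.entry p ≤ d ∧ d < T.entry q := by
  obtain ⟨k, hk⟩ : ∃ k, T.entry q = T.entry p + k + 1 :=
    ⟨T.entry q - T.entry p - 1, by omega⟩
  induction k generalizing q with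
  | zero => exact ⟨T.entry p, ⟨p, hp, q, hq, rfl, hk, hrow⟩, le_rfl, by omega⟩
  | succ k ih =>
    have hq_le := (mem_Icc.1 (T.mapsTo q hq)).2
    have hp_pos := (mem_Icc.1 (T.mapsTo p hp)).1
    obtain ⟨q', hq', hq'v⟩ := T.surjOn (T.entry p + k + 1) (mem_Icc.2 ⟨by omega, by omega⟩)
    by_cases hrow' : q'.1 < q.1
    · exact ⟨T.entry p + k + 1, ⟨q', hq', q, hq, hq'v, hk, hrow'⟩, by omega, by omega⟩
    · obtain ⟨d, hd, hpd, hdq'⟩ := ih hq' (by omega) (by omega) hq'v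
      exact ⟨d, hd, hpd, by omega⟩

lemma legLen_le_card_descents_ge {p : ℕ × ℕ} (hp : p ∈ μ) :
    μ.legLen p ≤ #{d ∈ T.descents | T.entry p ≤ d} := by
  obtain ⟨k, hk⟩ : ∃ k, μ.legLen p = k := ⟨_, rfl⟩
  induction k generalizing p with
  | zero => exact hk.le.trans (Nat.zero_le _)
  | succ k ih =>
    obtain ⟨r, c⟩ := p
    have hbelow : (r + 1, c) ∈ μ := by
      simp only [legLen] at hk
      exact mem_iff_lt_colLen.2 (by omega)
    have hk' : μ.legLen (r + 1, c) = k := by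
      simp only [legLen] at hk ⊢
      omega
    have hbelow' := (mem_cells _).2 hbelow
    obtain ⟨d, hd, hpd, hdq⟩ := T.exists_des_mem_Ico ((mem_cells _).2 hp) hbelow'
      (Nat.lt_succ_self r) (T.col_lt (Nat.lt_succ_self r) hbelow)
    have hd_lt := (mem_Icc.1 (T.mapsTo _ hbelow')).2
    have := card_filter_le_lt_card_filter_le (mem_descents.2 ⟨by omega, hd⟩) hpd hdq
    have := ih hbelow hk'
    omega

lemma bstat_le_maj : bstat μ ≤ T.maj := by
  rw [← sum_legLen_eq_bstat, maj_eq_sum_card_descents_ge]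
  exact sum_le_sum fun p hp => T.legLen_le_card_descents_ge ((mem_cells p).1 hp)

end SYT

namespace YoungDiagram

variable {μ : YoungDiagram}

/-- Once the columns are aligned at the bottom, the cells of equal leg length form a row. -/
def minMajKey (μ : YoungDiagram) (p : ℕ × ℕ) : ℕᵒᵈ ×ₗ ℕ :=
  toLex (OrderDual.toDual (μ.legLen p), p.2)

lemma minMajKey_lt_iff {p q : ℕ × ℕ} :
    μ.minMajKey p < μ.minMajKey q ↔
      μ.legLen q < μ.legLen p ∨ μ.legLen p = μ.legLen q ∧ p.2 < q.2 := by
  rw [minMajKey, minMajKey, Prod.Lex.toLex_lt_toLex]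
  rfl

lemma injOn_minMajKey : Set.InjOn μ.minMajKey μ.cells := by
  intro p hp q hq h
  have hp' := mem_iff_lt_colLen.1 ((mem_cells p).1 hp)
  have hq' := mem_iff_lt_colLen.1 ((mem_cells q).1 hq)
  simp only [minMajKey, EmbeddingLike.apply_eq_iff_eq, Prod.mk.injEq, legLen] at h
  obtain ⟨hleg, hcol⟩ := h
  rw [hcol] at hleg hp'
  exact Prod.ext (by omega) hcol

lemma minMajKey_lt_of_snd_lt {i j₁ j₂ : ℕ} (hj : j₁ < j₂) (h : (i, j₂) ∈ μ) :
    μ.minMajKey (i, j₁) < μ.minMajKey (i, j₂) := by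
  have := mem_iff_lt_colLen.1 h
  have := μ.colLen_anti j₁ j₂ hj.le
  rw [minMajKey_lt_iff]
  simp only [legLen]
  omega

lemma minMajKey_lt_of_fst_lt {i₁ i₂ j : ℕ} (hi : i₁ < i₂) (h : (i₂, j) ∈ μ) :
    μ.minMajKey (i₁, j) < μ.minMajKey (i₂, j) := by
  have := mem_iff_lt_colLen.1 h
  rw [minMajKey_lt_iff]
  simp only [legLen]
  omega

lemma legLen_le_of_minMajKey_lt {p q : ℕ × ℕ} (h : μ.minMajKey p < μ.minMajKey q) :
    μ.legLen q ≤ μ.legLen p := by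
  rcases minMajKey_lt_iff.1 h with h | h <;> omega

lemma legLen_lt_of_minMajKey_lt {p q : ℕ × ℕ} (hp : p ∈ μ) (hq : q ∈ μ)
    (h : μ.minMajKey p < μ.minMajKey q) (hrow : p.1 < q.1) : μ.legLen q < μ.legLen p := by
  have := mem_iff_lt_colLen.1 hp
  have := mem_iff_lt_colLen.1 hq
  rcases minMajKey_lt_iff.1 h with h | ⟨hleg, hcol⟩
  · exact h
  · have := μ.colLen_anti _ _ hcol.le
    simp only [legLen] at hleg
    omega

end YoungDiagram

namespace SYT

variable {μ : YoungDiagram}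

def minMaj (μ : YoungDiagram) : SYT μ where
  entry := μ.cells.rankBy μ.minMajKey
  mapsTo _ := rankBy_mem_Icc
  injOn := injOn_rankBy injOn_minMajKey
  surjOn := surjOn_rankBy injOn_minMajKey
  row_lt hj h := rankBy_lt_rankBy ((mem_cells _).2 h) (minMajKey_lt_of_snd_lt hj h)
  col_lt hi h := rankBy_lt_rankBy ((mem_cells _).2 h) (minMajKey_lt_of_fst_lt hi h)

lemma card_descents_ge_minMaj_le_legLen {p : ℕ × ℕ} (hp : p ∈ μ) :
    #{d ∈ (minMaj μ).descents | (minMaj μ).entry p ≤ d} ≤ μ.legLen p := by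
  set T := minMaj μ
  obtain ⟨k, hk⟩ : ∃ k, T.entry p + k = μ.card :=
    ⟨_, Nat.add_sub_of_le (mem_Icc.1 (T.mapsTo p ((mem_cells p).1 hp))).2⟩
  induction k generalizing p with
  | zero =>
    refine (card_eq_zero.2 <| filter_eq_empty_iff.2 fun d hd h => ?_).trans_le (Nat.zero_le _)
    have := (mem_descents.1 hd).1
    omega
  | succ k ih =>
    have hp' := (mem_cells p).1 hp
    obtain ⟨q, hq, hqp⟩ := T.surjOn (T.entry p + 1) (mem_Icc.2 ⟨by omega, by omega⟩)
    have hq' := (mem_cells q).1 hq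
    have hkey : μ.minMajKey p < μ.minMajKey q :=
      lt_of_rankBy_lt (by change T.entry p < T.entry q; omega)
    have ih := ih hq' (by omega)
    by_cases hdes : T.entry p ∈ T.descents
    · obtain ⟨c, hc, d, hd, hcp, hdq, hrow⟩ := (mem_descents.1 hdes).2
      obtain rfl : c = p := T.injOn c hc p hp' hcp
      obtain rfl : d = q := T.injOn d hd q hq (hdq.trans hqp.symm)
      have := legLen_lt_of_minMajKey_lt hp hq hkey hrow
      have := card_filter_le_le_card_filter_succ_le_add_one T.descents (T.entry c)
      rw [← hqp] at this
      omega
    · rw [filter_le_eq_filter_succ_le hdes, ← hqp]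
      exact ih.trans (legLen_le_of_minMajKey_lt hkey)

theorem maj_minMaj : (minMaj μ).maj = bstat μ := by
  rw [← sum_legLen_eq_bstat, maj_eq_sum_card_descents_ge]
  refine sum_congr rfl fun p hp => ?_
  rw [mem_cells] at hp
  exact le_antisymm (card_descents_ge_minMaj_le_legLen hp)
    ((minMaj μ).legLen_le_card_descents_ge hp)

end SYT

/-- The minimum of the major index over `SYT(λ)` is `b(λ)`. -/
theorem min_maj_eq_bstat (μ : YoungDiagram) :
    IsLeast {m : ℕ | ∃ T : SYT μ, T.maj = m} (bstat μ) :=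
  ⟨⟨SYT.minMaj μ, SYT.maj_minMaj⟩, by rintro _ ⟨T, rfl⟩; exact T.bstat_le_maj⟩
end

section
/- The maximum value of the major index over all standard Young tableaux of shape λ ⊢ n equals C(n,2) − b(λ'), where λ' is the conjugate (transpose) partition of λ. -/
/-!
Since the major index and the sum of the non-descents of `T` add up to `C(n, 2)`, and
`b(λ') = ∑ c` over the cells `(r, c)` of `λ`, the non-descents of every tableau must be shown to
sum to at least `∑ c`, with equality for one tableau. The non-descents sum to `∑_v m(v)`, where
`m(v)` counts the non-descents `≥ v`. A run of descents moves strictly down, so between two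
entries of one row there is a non-descent; hence `m(T(r, c))` is at least the number
`λ_r - 1 - c` of cells to the right of `(r, c)`, and reflecting each row turns
`∑ (λ_r - 1 - c)` into `∑ c`. Equality is attained by filling the cells at distance `k` from the
right end of their row top to bottom, for `k = λ_1, …, 1` in turn: the non-descents of this
tableau are the numbers of cells in the columns `≥ j` for `j ≥ 1`, which sum to `∑ c`.
-/

open Finset YoungDiagram

theorem Finset.sum_Icc_card_filter_le {α : Type*} (s : Finset α) (f : α → ℕ) {N : ℕ}
    (hf : ∀ a ∈ s, f a ≤ N) : ∑ j ∈ Icc 1 N, #{a ∈ s | j ≤ f a} = ∑ a ∈ s, f a := by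
  have := sum_card_bipartiteAbove_eq_sum_card_bipartiteBelow (fun a j => j ≤ f a) (s := s)
    (t := Icc 1 N)
  simp only [bipartiteAbove, bipartiteBelow] at this
  rw [← this]
  refine sum_congr rfl fun a ha => ?_
  have := hf a ha
  rw [show {j ∈ Icc 1 N | j ≤ f a} = Icc 1 (f a) by
    ext j; simp only [mem_filter, mem_Icc]; omega]
  exact Nat.card_Icc 1 (f a)

namespace YoungDiagram

variable (μ : YoungDiagram)

lemma snd_lt_card {x : ℕ × ℕ} (hx : x ∈ μ.cells) : x.2 < μ.card := by
  calc x.2 < μ.rowLen x.1 := mem_iff_lt_rowLen.1 ((mem_cells x).1 hx)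
    _ = #(μ.row x.1) := μ.rowLen_eq_card
    _ ≤ μ.card := card_le_card (filter_subset _ _)

lemma card_transpose : μ.transpose.card = μ.card :=
  card_map _

lemma bstat_transpose_eq_sum_snd : bstat μ.transpose = ∑ x ∈ μ.cells, x.2 := by
  rw [bstat, card_transpose, ← sum_fiberwise_of_maps_to (g := Prod.snd)
    (fun x hx => mem_range.2 (μ.snd_lt_card hx))]
  refine sum_congr rfl fun j _ => ?_
  rw [rowLen_transpose, colLen_eq_card, sum_const_nat fun x hx => (mem_filter.1 hx).2, mul_comm]
  rfl

lemma sum_rowLen_sub_snd : ∑ x ∈ μ.cells, (μ.rowLen x.1 - 1 - x.2) = ∑ x ∈ μ.cells, x.2 := by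
  have hmem : ∀ x : ℕ × ℕ, x ∈ μ.cells ↔ x.2 < μ.rowLen x.1 := fun x =>
    (mem_cells x).trans mem_iff_lt_rowLen
  refine sum_nbij' (fun x => (x.1, μ.rowLen x.1 - 1 - x.2)) (fun x => (x.1, μ.rowLen x.1 - 1 - x.2))
    ?_ ?_ ?_ ?_ ?_ <;> intro x hx <;> simp only [hmem, Prod.ext_iff, true_and] at hx ⊢ <;> omega

def cardFromCol (j : ℕ) : ℕ := #{x ∈ μ.cells | j ≤ x.2}

lemma cardFromCol_zero : μ.cardFromCol 0 = μ.card := by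
  simp [cardFromCol]

lemma cardFromCol_card : μ.cardFromCol μ.card = 0 := by
  rw [cardFromCol, card_eq_zero, filter_eq_empty_iff]
  exact fun x hx => not_le.2 (μ.snd_lt_card hx)

lemma cardFromCol_antitone : Antitone μ.cardFromCol :=
  fun _ _ hjk => card_le_card (monotone_filter_right _ fun _ _ h => hjk.trans h)

lemma cardFromCol_eq_colLen_add (j : ℕ) :
    μ.cardFromCol j = μ.colLen j + μ.cardFromCol (j + 1) := by
  rw [cardFromCol, ← card_filter_add_card_filter_not (fun x => x.2 = j), colLen_eq_card,
    cardFromCol, filter_filter, filter_filter, col]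
  congr 2 <;> ext x <;> simp only [mem_filter] <;> exact and_congr_right fun _ => by omega

lemma sum_cardFromCol : ∑ j ∈ Icc 1 μ.card, μ.cardFromCol j = ∑ x ∈ μ.cells, x.2 :=
  sum_Icc_card_filter_le _ _ fun _ hx => (μ.snd_lt_card hx).le

lemma cardFromCol_succ_add_lt {r j : ℕ} (h : (r, j) ∈ μ) :
    μ.cardFromCol (j + 1) + r < μ.cardFromCol j := by
  have := mem_iff_lt_colLen.1 h
  rw [μ.cardFromCol_eq_colLen_add j]
  omega

end YoungDiagram

namespace SYT

variable {μ : YoungDiagram}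

section

variable (T : SYT μ)

open scoped Classical in
noncomputable def nonDescents : Finset ℕ := {i ∈ range μ.card | ¬ T.des i}

lemma mem_nonDescents {i : ℕ} : i ∈ T.nonDescents ↔ i < μ.card ∧ ¬ T.des i := by
  classical
  simp [nonDescents]

lemma maj_add_sum_nonDescents : T.maj + ∑ i ∈ T.nonDescents, i = μ.card.choose 2 := by
  classical
  rw [maj, ← sum_filter, nonDescents, sum_filter_add_sum_filter_not, sum_range_id,
    Nat.choose_two_right]

lemma fst_lt_fst_of_des {i : ℕ} (hi : T.des i) {p q : ℕ × ℕ} (hp : p ∈ μ.cells)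
    (hq : q ∈ μ.cells) (hpi : T.entry p = i) (hqi : T.entry q = i + 1) : p.1 < q.1 := by
  obtain ⟨p', hp', q', hq', hp'i, hq'i, hlt⟩ := hi
  rwa [T.injOn p hp p' hp' (hpi.trans hp'i.symm), T.injOn q hq q' hq' (hqi.trans hq'i.symm)]

lemma fst_lt_fst_of_forall_des {p q : ℕ × ℕ} (hp : p ∈ μ.cells) (hq : q ∈ μ.cells)
    (hpq : T.entry p < T.entry q) (hdes : ∀ i, T.entry p ≤ i → i < T.entry q → T.des i) :
    p.1 < q.1 := by
  obtain ⟨k, hk⟩ : ∃ k, T.entry q = T.entry p + k + 1 := ⟨T.entry q - T.entry p - 1, by omega⟩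
  induction k generalizing q with
  | zero => exact T.fst_lt_fst_of_des (hdes _ le_rfl hpq) hp hq rfl hk
  | succ k ih =>
    have hqn := (mem_Icc.1 (T.mapsTo q hq)).2
    obtain ⟨q', hq', hq'k⟩ := T.surjOn (T.entry p + k + 1) (mem_Icc.2 ⟨by omega, by omega⟩)
    calc p.1 < q'.1 := ih hq' (by omega) (fun i h1 h2 => hdes i h1 (by omega)) hq'k
      _ < q.1 := T.fst_lt_fst_of_des (hdes _ (by omega) (by omega)) hq' hq hq'k (by omega)

lemma exists_mem_nonDescents_of_fst_le {p q : ℕ × ℕ} (hp : p ∈ μ.cells) (hq : q ∈ μ.cells)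
    (hpq : T.entry p < T.entry q) (hrow : q.1 ≤ p.1) :
    ∃ i ∈ T.nonDescents, T.entry p ≤ i ∧ i < T.entry q := by
  by_contra! h
  refine (T.fst_lt_fst_of_forall_des hp hq hpq fun i h1 h2 => ?_).not_ge hrow
  have hqn := (mem_Icc.1 (T.mapsTo q hq)).2
  by_contra hi
  exact (h i (T.mem_nonDescents.2 ⟨by omega, hi⟩) h1).not_gt h2

lemma rowLen_le_card_nonDescents_ge {r c : ℕ} (h : (r, c) ∈ μ) :
    μ.rowLen r ≤ #{i ∈ T.nonDescents | T.entry (r, c) ≤ i} + c + 1 := by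
  obtain ⟨k, hk⟩ : ∃ k, μ.rowLen r = c + k + 1 :=
    ⟨μ.rowLen r - c - 1, by have := mem_iff_lt_rowLen.1 h; omega⟩
  induction k generalizing c with
  | zero => omega
  | succ k ih =>
    have h' : (r, c + 1) ∈ μ := mem_iff_lt_rowLen.2 (by omega)
    have hmem := (mem_cells _).2 h
    have hmem' := (mem_cells _).2 h'
    obtain ⟨i, hi, hci, hic⟩ :=
      T.exists_mem_nonDescents_of_fst_le hmem hmem' (T.row_lt (by omega) h') le_rfl
    have hlt : #{i ∈ T.nonDescents | T.entry (r, c + 1) ≤ i} <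
        #{i ∈ T.nonDescents | T.entry (r, c) ≤ i} := by
      refine card_lt_card ⟨monotone_filter_right _ fun j _ hj =>
        (T.row_lt (Nat.lt_succ_self c) h').le.trans hj, fun hsub => ?_⟩
      exact hic.not_ge (mem_filter.1 (hsub (mem_filter.2 ⟨hi, hci⟩))).2
    have := ih h' (by omega)
    omega

lemma sum_nonDescents_eq_sum_cells :
    ∑ i ∈ T.nonDescents, i = ∑ x ∈ μ.cells, #{i ∈ T.nonDescents | T.entry x ≤ i} := by
  calc ∑ i ∈ T.nonDescents, i
      = ∑ v ∈ Icc 1 μ.card, #{i ∈ T.nonDescents | v ≤ i} :=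
        (sum_Icc_card_filter_le _ _ fun i hi => (T.mem_nonDescents.1 hi).1.le).symm
    _ = ∑ x ∈ μ.cells, #{i ∈ T.nonDescents | T.entry x ≤ i} :=
        (sum_nbij T.entry T.mapsTo (fun x hx y hy => T.injOn x hx y hy)
          (fun v hv => T.surjOn v hv) fun _ _ => rfl).symm

lemma sum_snd_le_sum_nonDescents : ∑ x ∈ μ.cells, x.2 ≤ ∑ i ∈ T.nonDescents, i := by
  rw [← μ.sum_rowLen_sub_snd, sum_nonDescents_eq_sum_cells]
  refine sum_le_sum fun ⟨r, c⟩ hx => ?_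
  have := T.rowLen_le_card_nonDescents_ge ((mem_cells _).1 hx)
  dsimp only
  omega

lemma maj_le_choose_two_sub :
    T.maj ≤ μ.card.choose 2 - ∑ x ∈ μ.cells, x.2 := by
  have := T.maj_add_sum_nonDescents
  have := T.sum_snd_le_sum_nonDescents
  omega

end

/-- The cell `(r, c)` lies `k = rowLen r - c` places from the right end of its row. The cells
with a given `k` are filled from top to bottom with the entries in
`(cardFromCol k, cardFromCol (k - 1)]`, so that the only non-descents are the values
`cardFromCol k`. -/
def maxMajEntry (μ : YoungDiagram) (x : ℕ × ℕ) : ℕ :=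
  μ.cardFromCol (μ.rowLen x.1 - x.2) + x.1 + 1

lemma maxMajEntry_le {r c : ℕ} (h : (r, c) ∈ μ) :
    maxMajEntry μ (r, c) ≤ μ.cardFromCol (μ.rowLen r - c - 1) := by
  have hc := mem_iff_lt_rowLen.1 h
  have := μ.cardFromCol_succ_add_lt (mem_iff_lt_rowLen.2
    (show μ.rowLen r - c - 1 < μ.rowLen r by omega))
  rw [show μ.rowLen r - c - 1 + 1 = μ.rowLen r - c by omega] at this
  exact this

lemma maxMajEntry_mem_Icc {r c : ℕ} (h : (r, c) ∈ μ.cells) :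
    maxMajEntry μ (r, c) ∈ Icc 1 μ.card := by
  have := maxMajEntry_le ((mem_cells _).1 h)
  have := μ.cardFromCol_antitone (Nat.zero_le (μ.rowLen r - c - 1))
  rw [μ.cardFromCol_zero] at this
  exact mem_Icc.2 ⟨by simp [maxMajEntry], by omega⟩

lemma maxMajEntry_injOn : Set.InjOn (maxMajEntry μ) μ.cells := by
  rintro ⟨a, b⟩ hx ⟨d, e⟩ hy h
  rw [mem_coe, mem_cells] at hx hy
  have hb := mem_iff_lt_rowLen.1 hx
  have he := mem_iff_lt_rowLen.1 hy
  have hx' := maxMajEntry_le hx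
  have hy' := maxMajEntry_le hy
  simp only [maxMajEntry] at h hx' hy'
  have hk : μ.rowLen a - b = μ.rowLen d - e := by
    by_contra hne
    rcases Nat.lt_or_gt_of_ne hne with hlt | hlt
    · have := μ.cardFromCol_antitone (show μ.rowLen a - b ≤ μ.rowLen d - e - 1 by omega)
      omega
    · have := μ.cardFromCol_antitone (show μ.rowLen d - e ≤ μ.rowLen a - b - 1 by omega)
      omega
  rw [hk] at h
  obtain rfl : a = d := by omega
  rw [Prod.mk.injEq]
  omega

def maxMaj (μ : YoungDiagram) : SYT μ where
  entry := maxMajEntry μ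
  mapsTo _ hx := maxMajEntry_mem_Icc hx
  injOn _ hx _ hy h := maxMajEntry_injOn hx hy h
  surjOn v hv := by
    obtain ⟨x, hx, rfl⟩ := surjOn_of_injOn_of_card_le _ (fun _ hx => maxMajEntry_mem_Icc hx)
      maxMajEntry_injOn (by simp) hv
    exact ⟨x, hx, rfl⟩
  row_lt {r c₁ c₂} hc h := by
    have := μ.cardFromCol_antitone (show μ.rowLen r - c₂ ≤ μ.rowLen r - c₁ - 1 by
      have := mem_iff_lt_rowLen.1 h; omega)
    have := maxMajEntry_le (μ.up_left_mem le_rfl hc.le h)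
    simp only [maxMajEntry] at this ⊢
    omega
  col_lt {r₁ r₂ c} hr h := by
    have := μ.cardFromCol_antitone (Nat.sub_le_sub_right (μ.rowLen_anti r₁ r₂ hr.le) c)
    simp only [maxMajEntry]
    omega

lemma nonDescents_maxMaj_subset :
    (maxMaj μ).nonDescents ⊆ (Icc 1 μ.card).image μ.cardFromCol := by
  intro i hi
  obtain ⟨hin, hdes⟩ := (maxMaj μ).mem_nonDescents.1 hi
  rcases Nat.eq_zero_or_pos i with rfl | hpos
  · exact mem_image.2 ⟨μ.card, mem_Icc.2 ⟨by omega, le_rfl⟩, μ.cardFromCol_card⟩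
  obtain ⟨⟨a, b⟩, hab, hi⟩ := (maxMaj μ).surjOn i (mem_Icc.2 ⟨hpos, hin.le⟩)
  rw [mem_cells] at hab
  have hb := mem_iff_lt_rowLen.1 hab
  have hlen := maxMajEntry_le hab
  have hi' : μ.cardFromCol (μ.rowLen a - b) + a + 1 = i := hi
  have hcol : (a, μ.rowLen a - b - 1) ∈ μ := mem_iff_lt_rowLen.2 (by omega)
  have hsplit := μ.cardFromCol_eq_colLen_add (μ.rowLen a - b - 1)
  simp only [maxMajEntry] at hlen
  generalize hk : μ.rowLen a - b = k at hlen hi' hcol hsplit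
  rw [show k - 1 + 1 = k by omega] at hsplit
  by_cases htop : i = μ.cardFromCol (k - 1)
  · have hk1 : k - 1 ≠ 0 := fun h => by rw [h, μ.cardFromCol_zero] at htop; omega
    have : k - 1 < μ.card := μ.snd_lt_card ((mem_cells _).2 hcol)
    exact mem_image.2 ⟨k - 1, mem_Icc.2 ⟨by omega, by omega⟩, htop.symm⟩
  -- otherwise `i + 1` sits in the same group as `i`, one row lower
  have hbelow : (a + 1, k - 1) ∈ μ := mem_iff_lt_colLen.2 (by omega)
  have hb' := mem_iff_lt_rowLen.1 hbelow
  refine absurd ⟨(a, b), (mem_cells _).2 hab, (a + 1, μ.rowLen (a + 1) - k),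
    (mem_cells _).2 (mem_iff_lt_rowLen.2 (by omega)), hi, ?_,
    Nat.lt_succ_self a⟩ hdes
  change μ.cardFromCol (μ.rowLen (a + 1) - (μ.rowLen (a + 1) - k)) + (a + 1) + 1 = i + 1
  rw [show μ.rowLen (a + 1) - (μ.rowLen (a + 1) - k) = k by omega]
  omega

lemma maj_maxMaj : (maxMaj μ).maj = μ.card.choose 2 - ∑ x ∈ μ.cells, x.2 := by
  have hsum := calc
    ∑ i ∈ (maxMaj μ).nonDescents, i ≤ ∑ i ∈ (Icc 1 μ.card).image μ.cardFromCol, i :=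
        sum_le_sum_of_subset nonDescents_maxMaj_subset
    _ ≤ ∑ j ∈ Icc 1 μ.card, μ.cardFromCol j := sum_image_le_of_nonneg fun _ _ => Nat.zero_le _
    _ = ∑ x ∈ μ.cells, x.2 := μ.sum_cardFromCol
  have := (maxMaj μ).maj_add_sum_nonDescents
  have := (maxMaj μ).sum_snd_le_sum_nonDescents
  omega

end SYT

/-- The maximum of the major index over `SYT(λ)` is `C(n,2) - b(λ')`. -/
theorem max_maj_eq (μ : YoungDiagram) :
    IsGreatest {m : ℕ | ∃ T : SYT μ, T.maj = m}
      (μ.card.choose 2 - bstat μ.transpose) := by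
  rw [μ.bstat_transpose_eq_sum_snd]
  exact ⟨⟨SYT.maxMaj μ, SYT.maj_maxMaj⟩, by rintro _ ⟨T, rfl⟩; exact T.maj_le_choose_two_sub⟩
end

section
/- Let n = 2k + r with k, r ≥ 0. The minimum of maj over all standard Young tableaux of size n whose shape has exactly r odd columns is k, and it is attained by a tableau of shape (n−k, k). -/
open Finset

/-- helper: identify a rowLen from a membership characterization. -/
lemma rowLen_eq_of {μ : YoungDiagram} {i L : ℕ} (h : ∀ j, (i, j) ∈ μ ↔ j < L) :
    μ.rowLen i = L := by
  have h1 := (YoungDiagram.mem_iff_lt_rowLen (μ := μ) (i := i) (j := L)).symm.trans (h L)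
  have h2 := (YoungDiagram.mem_iff_lt_rowLen (μ := μ) (i := i) (j := μ.rowLen i)).symm.trans
    (h (μ.rowLen i))
  omega

lemma colLen_eq_of {μ : YoungDiagram} {j L : ℕ} (h : ∀ i, (i, j) ∈ μ ↔ i < L) :
    μ.colLen j = L := by
  have h1 := (YoungDiagram.mem_iff_lt_colLen (μ := μ) (i := L) (j := j)).symm.trans (h L)
  have h2 := (YoungDiagram.mem_iff_lt_colLen (μ := μ) (i := μ.colLen j) (j := j)).symm.trans
    (h (μ.colLen j))
  omega

/-- The two-row Young diagram with rows `a ≥ b`. -/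
def twoRow (a b : ℕ) (hba : b ≤ a) : YoungDiagram where
  cells := ({0} ×ˢ Finset.range a) ∪ ({1} ×ˢ Finset.range b)
  isLowerSet := by
    rintro ⟨i1, j1⟩ ⟨i2, j2⟩ ⟨hi, hj⟩ hm
    simp only [Finset.coe_union, Finset.coe_product, Finset.coe_singleton, Finset.coe_range,
      Set.mem_union, Set.mem_prod, Set.mem_singleton_iff, Set.mem_Iio] at hm ⊢
    simp only [Prod.fst, Prod.snd] at *
    omega

lemma mem_twoRow {a b : ℕ} {hba : b ≤ a} {c : ℕ × ℕ} :
    c ∈ twoRow a b hba ↔ (c.1 = 0 ∧ c.2 < a) ∨ (c.1 = 1 ∧ c.2 < b) := by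
  rcases c with ⟨i, j⟩
  show (i, j) ∈ ({0} ×ˢ Finset.range a) ∪ ({1} ×ˢ Finset.range b) ↔ _
  simp [Finset.mem_union, Finset.mem_product]
  omega

lemma twoRow_card {a b : ℕ} (hba : b ≤ a) : (twoRow a b hba).card = a + b := by
  show (({0} ×ˢ Finset.range a) ∪ ({1} ×ˢ Finset.range b)).card = a + b
  rw [Finset.card_union_of_disjoint]
  · simp [Finset.card_product]
  · simp only [Finset.disjoint_left]
    rintro ⟨i, j⟩ h1 h2
    simp [Finset.mem_product] at h1 h2
    omega

lemma twoRow_rowLen {a b : ℕ} (hba : b ≤ a) (i : ℕ) :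
    (twoRow a b hba).rowLen i = if i = 0 then a else if i = 1 then b else 0 := by
  apply rowLen_eq_of
  intro j
  rw [mem_twoRow]
  split_ifs <;> omega

lemma twoRow_colLen {a b : ℕ} (hba : b ≤ a) (j : ℕ) :
    (twoRow a b hba).colLen j = if j < b then 2 else if j < a then 1 else 0 := by
  apply colLen_eq_of
  intro i
  rw [mem_twoRow]
  split_ifs <;> omega


namespace SYT

variable {μ : YoungDiagram}

noncomputable def pos (T : SYT μ) (v : ℕ) : ℕ × ℕ :=
  if h : v ∈ Finset.Icc 1 μ.card then (T.surjOn v h).choose else (0, 0)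

lemma pos_mem (T : SYT μ) {v : ℕ} (h : v ∈ Finset.Icc 1 μ.card) : T.pos v ∈ μ.cells := by
  rw [pos, dif_pos h]; exact (T.surjOn v h).choose_spec.1

lemma entry_pos (T : SYT μ) {v : ℕ} (h : v ∈ Finset.Icc 1 μ.card) : T.entry (T.pos v) = v := by
  rw [pos, dif_pos h]; exact (T.surjOn v h).choose_spec.2

lemma pos_entry (T : SYT μ) {c : ℕ × ℕ} (hc : c ∈ μ.cells) : T.pos (T.entry c) = c :=
  T.injOn _ (T.pos_mem (T.mapsTo c hc)) c hc (T.entry_pos (T.mapsTo c hc))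

lemma des_of_row_lt (T : SYT μ) {v : ℕ} (hv : v ∈ Finset.Icc 1 μ.card)
    (hv1 : v + 1 ∈ Finset.Icc 1 μ.card) (h : (T.pos v).1 < (T.pos (v + 1)).1) : T.des v :=
  ⟨T.pos v, T.pos_mem hv, T.pos (v + 1), T.pos_mem hv1, T.entry_pos hv, T.entry_pos hv1, h⟩

lemma exists_des (T : SYT μ) : ∀ m, ∀ v, 1 ≤ v → v + m ≤ μ.card →
    (T.pos v).1 < (T.pos (v + m)).1 → ∃ t, v ≤ t ∧ t < v + m ∧ T.des t := by
  intro m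
  induction m with
  | zero => intro v _ _ h; simp at h
  | succ m ih =>
    intro v hv hvm hrow
    by_cases hc : (T.pos v).1 < (T.pos (v + 1)).1
    · exact ⟨v, le_refl v, by omega,
        T.des_of_row_lt (Finset.mem_Icc.mpr ⟨hv, by omega⟩) (Finset.mem_Icc.mpr ⟨by omega, by omega⟩) hc⟩
    · have heq : v + 1 + m = v + (m + 1) := by omega
      obtain ⟨t, h1, h2, h3⟩ := ih (v + 1) (by omega) (by omega) (by rw [heq]; omega)
      exact ⟨t, by omega, by omega, h3⟩

open scoped Classical in
lemma le_card_des (T : SYT μ) : ∀ m, ∀ v, 1 ≤ v → v ≤ μ.card →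
    m + (T.pos v).1 + 1 ≤ μ.colLen (T.pos v).2 →
    m ≤ ((Finset.Ico v μ.card).filter T.des).card := by
  intro m
  induction m with
  | zero => intro v _ _ _; exact Nat.zero_le _
  | succ m ih =>
    intro v hv1 hvn hcol
    have hvIcc : v ∈ Finset.Icc 1 μ.card := Finset.mem_Icc.mpr ⟨hv1, hvn⟩
    have hcell : ((T.pos v).1 + 1, (T.pos v).2) ∈ μ := by
      rw [YoungDiagram.mem_iff_lt_colLen]; omega
    set u := T.entry ((T.pos v).1 + 1, (T.pos v).2) with hu
    have hum : u ∈ Finset.Icc 1 μ.card := T.mapsTo _ hcell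
    have hu_le := (Finset.mem_Icc.mp hum).2
    have hu_ge := (Finset.mem_Icc.mp hum).1
    have hpu : T.pos u = ((T.pos v).1 + 1, (T.pos v).2) := T.pos_entry hcell
    have hvu : v < u := by
      have h2 := T.col_lt (Nat.lt_succ_self (T.pos v).1) hcell
      rwa [Prod.mk.eta, T.entry_pos hvIcc] at h2
    have hrow : (T.pos v).1 < (T.pos u).1 := by rw [hpu]; omega
    obtain ⟨t, ht1, ht2, ht3⟩ := T.exists_des (u - v) v hv1 (by omega)
      (by rw [show v + (u - v) = u by omega]; exact hrow)
    have hIH : m ≤ ((Finset.Ico u μ.card).filter T.des).card := by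
      apply ih u hu_ge hu_le
      rw [hpu]
      simp only
      omega
    have hnot : t ∉ (Finset.Ico u μ.card).filter T.des := by
      intro hx
      have := (Finset.mem_Ico.mp (Finset.mem_filter.mp hx).1).1
      omega
    have hsub : insert t ((Finset.Ico u μ.card).filter T.des) ⊆
        (Finset.Ico v μ.card).filter T.des := by
      intro x hx
      rcases Finset.mem_insert.mp hx with rfl | hx
      · exact Finset.mem_filter.mpr ⟨Finset.mem_Ico.mpr ⟨ht1, by omega⟩, ht3⟩
      · obtain ⟨hx1, hx2⟩ := Finset.mem_filter.mp hx
        obtain ⟨hx3, hx4⟩ := Finset.mem_Ico.mp hx1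
        exact Finset.mem_filter.mpr ⟨Finset.mem_Ico.mpr ⟨by omega, hx4⟩, hx2⟩
    have hcard := Finset.card_le_card hsub
    rw [Finset.card_insert_of_notMem hnot] at hcard
    omega

open scoped Classical in
lemma maj_eq_sum (T : SYT μ) :
    T.maj = ∑ v ∈ Finset.Icc 1 μ.card, ((Finset.Ico v μ.card).filter T.des).card := by
  rw [SYT.maj]
  have h1 : ∀ i ∈ Finset.range μ.card, (if T.des i then i else 0) =
      ∑ v ∈ Finset.Icc 1 μ.card, (if T.des i ∧ v ≤ i then 1 else 0) := by
    intro i hi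
    rw [Finset.mem_range] at hi
    by_cases h : T.des i
    · simp only [h, true_and, if_pos]
      rw [Finset.sum_boole]
      norm_cast
      have he : (Finset.Icc 1 μ.card).filter (fun x => x ≤ i) = Finset.Icc 1 i := by
        ext x; simp only [Finset.mem_filter, Finset.mem_Icc]; omega
      rw [he, Nat.card_Icc]
      omega
    · simp [h]
  rw [Finset.sum_congr rfl h1, Finset.sum_comm]
  refine Finset.sum_congr rfl fun v hv => ?_
  rw [Finset.sum_boole]
  norm_cast
  congr 1
  ext x
  simp only [Finset.mem_filter, Finset.mem_range, Finset.mem_Ico]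
  tauto

end SYT

lemma snd_lt_card {μ : YoungDiagram} {c : ℕ × ℕ} (hc : c ∈ μ.cells) : c.2 < μ.card := by
  have h0 : (0, c.2) ∈ μ := μ.up_left_mem (Nat.zero_le _) (le_refl _) hc
  have h1 : c.2 < μ.rowLen 0 := YoungDiagram.mem_iff_lt_rowLen.mp h0
  have h2 : μ.rowLen 0 ≤ μ.card := by
    rw [YoungDiagram.rowLen_eq_card]
    apply Finset.card_le_card
    intro x hx
    exact (YoungDiagram.mem_row_iff.mp hx).1
  omega

lemma cells_eq_biUnion (μ : YoungDiagram) :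
    μ.cells = (Finset.range μ.card).biUnion
      (fun j => (Finset.range (μ.colLen j)).image (fun i => (i, j))) := by
  ext ⟨i, j⟩
  simp only [Finset.mem_biUnion, Finset.mem_range, Finset.mem_image, Prod.mk.injEq]
  constructor
  · intro hc
    exact ⟨j, snd_lt_card hc, i, YoungDiagram.mem_iff_lt_colLen.mp hc, rfl, rfl⟩
  · rintro ⟨j', _, i', hi', rfl, rfl⟩
    exact YoungDiagram.mem_iff_lt_colLen.mpr hi'

lemma sum_cells (μ : YoungDiagram) (f : ℕ × ℕ → ℕ) :
    ∑ c ∈ μ.cells, f c =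
      ∑ j ∈ Finset.range μ.card, ∑ i ∈ Finset.range (μ.colLen j), f (i, j) := by
  rw [cells_eq_biUnion μ, Finset.sum_biUnion]
  · refine Finset.sum_congr rfl fun j _ => ?_
    rw [Finset.sum_image]
    intro x _ y _ hxy
    simpa using hxy
  · intro x _ y _ hxy
    simp only [Finset.disjoint_left, Finset.mem_image, Finset.mem_range]
    rintro ⟨a, b⟩ ⟨i1, _, h1⟩ ⟨i2, _, h2⟩
    apply hxy
    rw [Prod.mk.injEq] at h1 h2
    omega

lemma card_eq_sum_colLen (μ : YoungDiagram) :
    μ.card = ∑ j ∈ Finset.range μ.card, μ.colLen j := by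
  have := sum_cells μ (fun _ => 1)
  simpa using this

lemma half_le_sum (L : ℕ) : L / 2 ≤ ∑ i ∈ Finset.range L, (L - i - 1) := by
  rcases Nat.eq_zero_or_pos L with rfl | h
  · simp
  · have h0 : (L - 0 - 1) ≤ ∑ i ∈ Finset.range L, (L - i - 1) :=
      Finset.single_le_sum (f := fun i => L - i - 1) (fun i _ => Nat.zero_le _) (Finset.mem_range.mpr h)
    omega

open scoped Classical in
lemma maj_lower_bound {μ : YoungDiagram} (T : SYT μ) :
    ∑ j ∈ Finset.range μ.card, μ.colLen j / 2 ≤ T.maj := by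
  rw [T.maj_eq_sum]
  have step1 : ∑ c ∈ μ.cells, (μ.colLen c.2 - c.1 - 1) ≤
      ∑ v ∈ Finset.Icc 1 μ.card, ((Finset.Ico v μ.card).filter T.des).card := by
    have hbij : ∑ c ∈ μ.cells, (μ.colLen c.2 - c.1 - 1) =
        ∑ v ∈ Finset.Icc 1 μ.card, (μ.colLen (T.pos v).2 - (T.pos v).1 - 1) := by
      refine Finset.sum_nbij' T.entry T.pos (fun c hc => T.mapsTo c hc)
        (fun v hv => T.pos_mem hv) (fun c hc => T.pos_entry hc)
        (fun v hv => T.entry_pos hv) (fun c hc => ?_)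
      rw [T.pos_entry hc]
    rw [hbij]
    refine Finset.sum_le_sum fun v hv => ?_
    have hv' := Finset.mem_Icc.mp hv
    have hmem : T.pos v ∈ μ := T.pos_mem hv
    have hcl : (T.pos v).1 < μ.colLen (T.pos v).2 := by
      rw [← YoungDiagram.mem_iff_lt_colLen]
      rwa [Prod.mk.eta]
    exact T.le_card_des _ v hv'.1 hv'.2 (by omega)
  refine le_trans ?_ step1
  rw [sum_cells μ (fun c => μ.colLen c.2 - c.1 - 1)]
  exact Finset.sum_le_sum fun j _ => half_le_sum (μ.colLen j)

def trEntry (k : ℕ) (c : ℕ × ℕ) : ℕ := if c.1 = 0 ∧ c.2 < k then c.2 + 1 else c.2 + k + 1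

def twoRowSYT (k r : ℕ) : SYT (twoRow (k + r) k (Nat.le_add_right k r)) where
  entry := trEntry k
  mapsTo := by
    rintro ⟨i, j⟩ hc
    rw [YoungDiagram.mem_cells, mem_twoRow] at hc
    simp only [Finset.mem_Icc, twoRow_card, trEntry]
    split_ifs <;> simp at * <;> omega
  injOn := by
    rintro ⟨i1, j1⟩ hc ⟨i2, j2⟩ hd he
    rw [YoungDiagram.mem_cells, mem_twoRow] at hc hd
    simp only [trEntry] at he
    split_ifs at he <;> simp_all <;> omega
  surjOn := by
    intro v hv
    rw [Finset.mem_Icc, twoRow_card] at hv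
    rcases le_or_gt v k with h1 | h1
    · exact ⟨(0, v - 1), by rw [YoungDiagram.mem_cells, mem_twoRow]; simp; omega,
        by simp only [trEntry]; split_ifs <;> simp_all <;> omega⟩
    rcases le_or_gt v (2 * k) with h2 | h2
    · exact ⟨(1, v - k - 1), by rw [YoungDiagram.mem_cells, mem_twoRow]; simp; omega,
        by simp only [trEntry]; split_ifs <;> simp_all <;> omega⟩
    · exact ⟨(0, v - k - 1), by rw [YoungDiagram.mem_cells, mem_twoRow]; simp; omega,
        by simp only [trEntry]; split_ifs <;> simp_all <;> omega⟩
  row_lt := by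
    intro i j1 j2 hj hm
    rw [mem_twoRow] at hm
    simp only [trEntry]
    split_ifs <;> simp_all <;> omega
  col_lt := by
    intro i1 i2 j hi hm
    rw [mem_twoRow] at hm
    simp only [trEntry]
    split_ifs <;> simp_all <;> omega

open scoped Classical in
lemma twoRowSYT_des_iff (k r : ℕ) (i : ℕ) :
    (twoRowSYT k r).des i ↔ (i = k ∧ 1 ≤ k) := by
  constructor
  · rintro ⟨⟨c1, c2⟩, hc, ⟨d1, d2⟩, hd, ec, ed, hlt⟩
    rw [YoungDiagram.mem_cells, mem_twoRow] at hc hd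
    simp only [twoRowSYT, trEntry] at ec ed
    split_ifs at ec ed <;> simp_all <;> omega
  · rintro ⟨h, hk⟩
    rw [h]
    refine ⟨(0, k - 1), ?_, (1, 0), ?_, ?_, ?_, Nat.zero_lt_one⟩
    · rw [YoungDiagram.mem_cells, mem_twoRow]; simp; omega
    · rw [YoungDiagram.mem_cells, mem_twoRow]; simp; omega
    · simp only [twoRowSYT, trEntry]; split_ifs <;> simp_all <;> omega
    · simp only [twoRowSYT, trEntry]; split_ifs <;> simp_all <;> omega

open scoped Classical in
lemma twoRowSYT_maj (k r : ℕ) : (twoRowSYT k r).maj = k := by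
  rw [SYT.maj]
  rcases Nat.eq_zero_or_pos k with rfl | hk
  · simp [twoRowSYT_des_iff]
  · have : ∀ i ∈ Finset.range (twoRow (k + r) k (Nat.le_add_right k r)).card,
        (if (twoRowSYT k r).des i then i else 0) = if i = k then k else 0 := by
      intro i _
      by_cases h : i = k
      · subst h
        rw [if_pos ((twoRowSYT_des_iff i r i).mpr ⟨rfl, hk⟩), if_pos rfl]
      · simp [twoRowSYT_des_iff, h]
    rw [Finset.sum_congr rfl this, Finset.sum_ite_eq' (Finset.range _) k (fun _ => k),
      if_pos]
    rw [Finset.mem_range, twoRow_card]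
    omega


lemma card_eq_two_mul_add (μ : YoungDiagram) :
    μ.card = 2 * (∑ j ∈ Finset.range μ.card, μ.colLen j / 2) + oddCols μ := by
  have h1 := card_eq_sum_colLen μ
  have h2 : ∀ j ∈ Finset.range μ.card, μ.colLen j =
      2 * (μ.colLen j / 2) + (if Odd (μ.colLen j) then 1 else 0) := by
    intro j _
    rcases Nat.even_or_odd (μ.colLen j) with h | h
    · have he := Nat.even_iff.mp h
      rw [if_neg (Nat.not_odd_iff_even.mpr h)]
      omega
    · have ho := Nat.odd_iff.mp h
      rw [if_pos h]
      omega
  rw [Finset.sum_congr rfl h2, Finset.sum_add_distrib, ← Finset.mul_sum, Finset.sum_boole] at h1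
  rw [oddCols]
  simpa using h1


/-- Let `n = 2k + r`. The minimum of `maj` over standard Young tableaux of size `n`
whose shape has exactly `r` odd columns is `k`, attained by a tableau of shape `(n-k, k)`. -/
theorem min_maj_odd_cols (n k r : ℕ) (h : n = 2 * k + r) :
    IsLeast {m : ℕ | ∃ μ : YoungDiagram, μ.card = n ∧ oddCols μ = r ∧
        ∃ T : SYT μ, T.maj = m} k ∧
    ∃ μ : YoungDiagram,
      (∀ i, μ.rowLen i = if i = 0 then n - k else if i = 1 then k else 0) ∧
      ∃ T : SYT μ, T.maj = k := by
  set μ0 := twoRow (k + r) k (Nat.le_add_right k r) with hμ0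
  have hcard : μ0.card = n := by rw [hμ0, twoRow_card]; omega
  have hodd : oddCols μ0 = r := by
    rw [oddCols]
    have he : (Finset.range μ0.card).filter (fun j => Odd (μ0.colLen j)) =
        Finset.Ico k (k + r) := by
      ext j
      rw [Finset.mem_filter, Finset.mem_range, Finset.mem_Ico, hcard, hμ0, twoRow_colLen]
      split_ifs with h1 h2
      · simp only [(by decide : ¬ (Odd 2)), and_false, false_iff]; omega
      · simp only [(by decide : Odd 1), and_true]; omega
      · simp only [(by decide : ¬ (Odd 0)), and_false, false_iff]; omega
    rw [he, Nat.card_Ico]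
    omega
  refine ⟨⟨⟨μ0, hcard, hodd, twoRowSYT k r, twoRowSYT_maj k r⟩, ?_⟩,
    ⟨μ0, ?_, twoRowSYT k r, twoRowSYT_maj k r⟩⟩
  · rintro m ⟨μ, hc, ho, T, hm⟩
    have h1 := maj_lower_bound T
    have h2 := card_eq_two_mul_add μ
    rw [hc, ho] at h2
    rw [hc] at h1
    omega
  · intro i
    rw [hμ0, twoRow_rowLen]
    split_ifs <;> omega
end

section
/- For every partition ν of n = 2k whose conjugate has no odd parts (equivalently, every column of ν has even length), one has b(ν) ≥ k, with equality if and only if ν = (k, k). -/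

lemma myColLen_le_card (ν : YoungDiagram) : ν.colLen 0 ≤ ν.card := by
  rw [YoungDiagram.colLen_eq_card]
  exact Finset.card_filter_le _ _

lemma myRowLen_zero (ν : YoungDiagram) {i : ℕ} (h : ν.card ≤ i) : ν.rowLen i = 0 := by
  by_contra hne
  have h0 : (i, 0) ∈ ν := by
    rw [YoungDiagram.mem_iff_lt_rowLen]; omega
  rw [YoungDiagram.mem_iff_lt_colLen] at h0
  have := myColLen_le_card ν
  omega

lemma mySum_rowLen (ν : YoungDiagram) : ∑ i ∈ Finset.range ν.card, ν.rowLen i = ν.card := by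
  have hcells : ν.cells = (Finset.range ν.card).biUnion ν.row := by
    ext ⟨i, j⟩
    simp only [Finset.mem_biUnion, Finset.mem_range, YoungDiagram.mem_row_iff]
    constructor
    · intro h
      refine ⟨i, ?_, ⟨h, rfl⟩⟩
      have h0 : (i, 0) ∈ ν := ν.up_left_mem le_rfl (Nat.zero_le _) h
      rw [YoungDiagram.mem_iff_lt_colLen] at h0
      have := myColLen_le_card ν
      omega
    · rintro ⟨a, _, h, rfl⟩
      exact h
  have hdisj : ∀ x ∈ Finset.range ν.card, ∀ y ∈ Finset.range ν.card, x ≠ y →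
      Disjoint (ν.row x) (ν.row y) := by
    intro x _ y _ hxy
    refine Finset.disjoint_left.2 fun c hc hc' => ?_
    rw [YoungDiagram.mem_row_iff] at hc hc'
    exact hxy (hc.2 ▸ hc'.2)
  have h1 : ν.cells.card = ∑ i ∈ Finset.range ν.card, (ν.row i).card := by
    rw [hcells]; exact Finset.card_biUnion hdisj
  have h2 : ∀ i, (ν.row i).card = ν.rowLen i := fun i => (YoungDiagram.rowLen_eq_card ν).symm
  simp only [h2] at h1
  exact h1.symm

lemma mySum_pair (f : ℕ → ℕ) (k : ℕ) :
    ∑ i ∈ Finset.range (2 * k), f i = ∑ t ∈ Finset.range k, (f (2 * t) + f (2 * t + 1)) := by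
  induction k with
  | zero => simp
  | succ n ih =>
    have : 2 * (n + 1) = (2 * n + 1) + 1 := by ring
    rw [this, Finset.sum_range_succ, Finset.sum_range_succ, ih, Finset.sum_range_succ]
    ring

lemma myPair (ν : YoungDiagram) (heven : ∀ j, Even (ν.colLen j)) (t : ℕ) :
    ν.rowLen (2 * t + 1) = ν.rowLen (2 * t) := by
  refine le_antisymm (ν.rowLen_anti _ _ (by omega)) ?_
  by_contra hlt
  push_neg at hlt
  set j := ν.rowLen (2 * t + 1) with hj
  have h1 : (2 * t, j) ∈ ν := by rw [YoungDiagram.mem_iff_lt_rowLen]; omega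
  have h2 : (2 * t + 1, j) ∉ ν := by rw [YoungDiagram.mem_iff_lt_rowLen]; omega
  rw [YoungDiagram.mem_iff_lt_colLen] at h1 h2
  obtain ⟨m, hm⟩ := heven j
  omega

theorem bstat_ge_of_even_cols' (k : ℕ) (ν : YoungDiagram) (hcard : ν.card = 2 * k)
    (heven : ∀ j, Even (ν.colLen j)) :
    k ≤ ∑ i ∈ Finset.range ν.card, i * ν.rowLen i ∧
      ((∑ i ∈ Finset.range ν.card, i * ν.rowLen i) = k ↔
        ∀ i, ν.rowLen i = if i < 2 then k else 0) := by
  have hpair := myPair ν heven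
  have hsum : ∑ t ∈ Finset.range k, (ν.rowLen (2 * t) + ν.rowLen (2 * t + 1)) = 2 * k := by
    rw [← mySum_pair, ← hcard, mySum_rowLen]
  have hodd : ∑ t ∈ Finset.range k, ν.rowLen (2 * t + 1) = k := by
    have h2 : ∑ t ∈ Finset.range k, (ν.rowLen (2 * t) + ν.rowLen (2 * t + 1)) =
        2 * ∑ t ∈ Finset.range k, ν.rowLen (2 * t + 1) := by
      rw [Finset.mul_sum]
      exact Finset.sum_congr rfl fun t _ => by rw [hpair t]; ring
    omega
  have hb : ∑ i ∈ Finset.range ν.card, i * ν.rowLen i =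
      ∑ t ∈ Finset.range k, (2 * t * ν.rowLen (2 * t) + (2 * t + 1) * ν.rowLen (2 * t + 1)) := by
    rw [hcard, mySum_pair]
  have hle : ∀ t ∈ Finset.range k, ν.rowLen (2 * t + 1) ≤
      2 * t * ν.rowLen (2 * t) + (2 * t + 1) * ν.rowLen (2 * t + 1) := by
    intro t _
    nlinarith [Nat.zero_le (ν.rowLen (2 * t)), Nat.zero_le t]
  have hineq : k ≤ ∑ i ∈ Finset.range ν.card, i * ν.rowLen i :=
    calc k = ∑ t ∈ Finset.range k, ν.rowLen (2 * t + 1) := hodd.symm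
      _ ≤ ∑ t ∈ Finset.range k, (2 * t * ν.rowLen (2 * t) + (2 * t + 1) * ν.rowLen (2 * t + 1)) :=
          Finset.sum_le_sum hle
      _ = ∑ i ∈ Finset.range ν.card, i * ν.rowLen i := hb.symm
  refine ⟨hineq, ?_, ?_⟩
  · -- equality → shape
    intro heq
    have hzero : ∀ i, 2 ≤ i → ν.rowLen i = 0 := by
      intro i hi
      by_cases hik : i < 2 * k
      · have heqsum : ∑ t ∈ Finset.range k, ν.rowLen (2 * t + 1) =
            ∑ t ∈ Finset.range k,
              (2 * t * ν.rowLen (2 * t) + (2 * t + 1) * ν.rowLen (2 * t + 1)) := by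
          rw [← hb, heq, hodd]
        have hterm := (Finset.sum_eq_sum_iff_of_le hle).1 heqsum
        obtain ⟨t, ht1, htk, hcase⟩ : ∃ t, 1 ≤ t ∧ t < k ∧ (i = 2 * t ∨ i = 2 * t + 1) :=
          ⟨i / 2, by omega, by omega, by omega⟩
        have h := hterm t (Finset.mem_range.2 htk)
        have e : (2 * t + 1) * ν.rowLen (2 * t + 1) =
            2 * t * ν.rowLen (2 * t + 1) + ν.rowLen (2 * t + 1) := by ring
        rw [e] at h
        have h2 : 2 * t * ν.rowLen (2 * t) + 2 * t * ν.rowLen (2 * t + 1) = 0 := by linarith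
        have ha : 2 * t * ν.rowLen (2 * t) = 0 := by omega
        have hb' : 2 * t * ν.rowLen (2 * t + 1) = 0 := by omega
        have ha0 : ν.rowLen (2 * t) = 0 := by
          rcases Nat.mul_eq_zero.mp ha with h' | h'
          · omega
          · exact h'
        have hb0 : ν.rowLen (2 * t + 1) = 0 := by
          rcases Nat.mul_eq_zero.mp hb' with h' | h'
          · omega
          · exact h'
        rcases hcase with rfl | rfl
        · exact ha0
        · exact hb0
      · exact myRowLen_zero ν (by omega)
    intro i
    by_cases hi2 : i < 2
    · simp only [hi2, if_pos]
      have hk0 : ν.rowLen 0 + ν.rowLen 1 = 2 * k := by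
        rcases Nat.eq_zero_or_pos k with rfl | hk
        · have e0 := myRowLen_zero ν (i := 0) (by omega)
          have e1 := myRowLen_zero ν (i := 1) (by omega)
          omega
        · have h0 : ∀ b ∈ Finset.range k, b ≠ 0 →
              ν.rowLen (2 * b) + ν.rowLen (2 * b + 1) = 0 := by
            intro b _ hb0
            have e0 := hzero (2 * b) (by omega)
            have e1 := hzero (2 * b + 1) (by omega)
            omega
          have hsingle := Finset.sum_eq_single_of_mem (s := Finset.range k)
            (f := fun t => ν.rowLen (2 * t) + ν.rowLen (2 * t + 1)) 0
            (Finset.mem_range.2 hk) h0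
          rw [hsingle] at hsum
          simpa using hsum
      have h01 : ν.rowLen 1 = ν.rowLen 0 := by simpa using hpair 0
      interval_cases i <;> omega
    · simp only [hi2, if_neg]
      exact hzero i (by omega)
  · intro hr
    rw [hcard]
    rw [Finset.sum_eq_single 1]
    · rw [hr 1]; simp
    · intro b _ hb1
      rcases Nat.eq_zero_or_pos b with rfl | hbpos
      · simp
      · rw [hr b, if_neg (by omega)]; simp
    · intro h1
      have hk0 : k = 0 := by
        by_contra hk
        exact h1 (Finset.mem_range.2 (by omega))
      subst hk0
      simp [hr 1]

/-- If every column of `ν ⊢ 2k` has even length then `b(ν) ≥ k`, with equality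
iff `ν = (k, k)`. -/
theorem bstat_ge_of_even_cols (k : ℕ) (ν : YoungDiagram) (hcard : ν.card = 2 * k)
    (heven : ∀ j, Even (ν.colLen j)) :
    k ≤ bstat ν ∧
      (bstat ν = k ↔ ∀ i, ν.rowLen i = if i < 2 then k else 0) := by
  exact bstat_ge_of_even_cols' k ν hcard heven
end

section
/- Let n = 2k be even. There is no fixed-point-free involution π ∈ S_n (i.e., π² = id and π has no fixed points) with maj(π) = k + 1. -/
/-- The major index of a permutation of `Fin n`: the sum of all positions
`i ∈ {1,…,n-1}` (1-indexed) such that `π(i) > π(i+1)`. -/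
def majPerm {n : ℕ} (π : Equiv.Perm (Fin n)) : ℕ :=
  ∑ i ∈ Finset.range n, if h : i + 1 < n then
    (if π ⟨i + 1, h⟩ < π ⟨i, Nat.lt_of_succ_lt h⟩ then i + 1 else 0) else 0

/-!
Extend `π` to a permutation `σ` of `ℕ` and let `D` be its set of descents `i`
(`σ (i + 1) < σ i`), each weighted `i + 1`. Since `σ` is a fixed-point-free involution, the
maximum `2k - 1` sits at position `σ (2k - 1) ≠ 2k - 1`, which is therefore a descent, and
likewise position `σ 0 - 1` is a descent. Between consecutive descents `σ` increases by at least
one per step, so if all descents were below `k - 1` the final run would give `σ (2k - 1) ≥ k`.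
Hence some descent is at least `k - 1`, and as the weights sum to `k + 1`, either
`D = {k}` or `D = {0, k - 1}` with `k ≥ 2`. If `D = {k}`, the two special descents force
`σ k = 2k - 1` and `σ 0 = k + 1`, and the increasing run `σ 0 < ⋯ < σ k` overshoots. If
`D = {0, k - 1}`, the final run `σ k < ⋯ < σ (2k - 1) = k - 1` forces `σ k = 0` and
`σ (k + 1) = 1`, hence `σ 0 = k < k + 1 = σ 1`, contradicting the descent at `0`.
-/

open Finset Function

def descents (f : ℕ → ℕ) (n : ℕ) : Finset ℕ :=
  (range n).filter fun i => i + 1 < n ∧ f (i + 1) < f i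

section Descents

variable {f : ℕ → ℕ} {n i : ℕ}

theorem mem_descents : i ∈ descents f n ↔ i + 1 < n ∧ f (i + 1) < f i := by
  simp only [descents, mem_filter, mem_range, and_iff_right_iff_imp]
  omega

theorem apply_add_sub_le_of_no_descent (hf : Injective f) {s t : ℕ} (hst : s ≤ t) (ht : t < n)
    (h : ∀ i ∈ descents f n, i < s ∨ t ≤ i) : f s + (t - s) ≤ f t := by
  induction t, hst using Nat.le_induction with
  | base => simp
  | succ t hst ih =>
    have hstep : f t < f (t + 1) := by
      have hnot : t ∉ descents f n := fun ht' => by have := h t ht'; omega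
      have hne : f t ≠ f (t + 1) := hf.ne (by omega)
      rw [mem_descents] at hnot
      omega
    have := ih (by omega) fun i hi => by have := h i hi; omega
    omega

theorem mem_descents_of_apply_eq_pred (hf : Injective f) (hlt : ∀ i < n, f i < n) {a : ℕ}
    (ha : f a = n - 1) (han : a + 1 < n) : a ∈ descents f n := by
  have h1 := hlt (a + 1) han
  have h2 : f (a + 1) ≠ f a := hf.ne (by omega)
  rw [mem_descents]
  omega

theorem pred_mem_descents_of_apply_eq_zero (hf : Injective f) {b : ℕ} (hb : f b = 0)
    (hb0 : 0 < b) (hbn : b < n) : b - 1 ∈ descents f n := by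
  have h : f (b - 1) ≠ f b := hf.ne (by omega)
  rw [mem_descents, Nat.sub_add_cancel hb0]
  omega

end Descents

theorem add_add_le_sum_succ {D : Finset ℕ} {d e : ℕ} (hd : d ∈ D) (he : e ∈ D)
    (hde : d ≠ e) : d + 1 + (e + 1) ≤ ∑ i ∈ D, (i + 1) := by
  have := sum_le_sum_of_subset (f := fun i => i + 1)
    (insert_subset hd (singleton_subset_iff.mpr he))
  rwa [sum_pair hde] at this

section Involution

variable {σ : Equiv.Perm ℕ} {n : ℕ}

theorem apply_pred_mem_descents (hσ : Involutive σ) (hlt : ∀ i < n, σ i < n)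
    (hne : ∀ i < n, σ i ≠ i) (hn : 0 < n) : σ (n - 1) ∈ descents σ n := by
  have h1 := hlt (n - 1) (by omega)
  have h2 := hne (n - 1) (by omega)
  exact mem_descents_of_apply_eq_pred σ.injective hlt (hσ _) (by omega)

theorem exists_mem_descents_ge (hσ : Involutive σ) (hlt : ∀ i < n, σ i < n)
    (hne : ∀ i < n, σ i ≠ i) {m : ℕ} (hm : 2 * m < n) :
    ∃ d ∈ descents σ n, m ≤ d := by
  have ha := apply_pred_mem_descents hσ hlt hne (by omega)
  by_contra! hsmall
  have := apply_add_sub_le_of_no_descent σ.injective (s := m) (t := n - 1) (by omega) (by omega)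
    fun i hi => Or.inl (hsmall i hi)
  have := hsmall _ ha
  omega

theorem two_mul_add_two_le_of_descents_subset_singleton (hσ : Involutive σ)
    (hlt : ∀ i < n, σ i < n) (hne : ∀ i < n, σ i ≠ i) (hn : 0 < n) {d : ℕ}
    (hD : descents σ n ⊆ {d}) : 2 * d + 2 ≤ n := by
  have hmax := apply_pred_mem_descents hσ hlt hne hn
  have ha : σ (n - 1) = d := mem_singleton.mp (hD hmax)
  have hb : σ 0 - 1 = d := mem_singleton.mp <| hD <|
    pred_mem_descents_of_apply_eq_zero σ.injective (hσ 0) (Nat.pos_of_ne_zero (hne 0 hn))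
      (hlt 0 hn)
  have hσd : σ d = n - 1 := ha ▸ hσ _
  rw [mem_descents] at hmax
  have := apply_add_sub_le_of_no_descent σ.injective (Nat.zero_le d) (by omega)
    fun i hi => Or.inr (mem_singleton.mp (hD hi)).ge
  omega

theorem false_of_descents_subset_pair {k : ℕ} (hσ : Involutive σ)
    (hlt : ∀ i < 2 * k, σ i < 2 * k) (hne : ∀ i < 2 * k, σ i ≠ i) (hk : 2 ≤ k)
    (hD : descents σ (2 * k) ⊆ {0, k - 1}) (h0 : 0 ∈ descents σ (2 * k)) : False := by
  have hrun : ∀ s, k ≤ s → s ≤ 2 * k - 1 → σ s + (2 * k - 1 - s) ≤ σ (2 * k - 1) :=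
    fun s hs hs' => apply_add_sub_le_of_no_descent (n := 2 * k) σ.injective hs' (by omega)
      fun i hi => by
        have := hD hi
        simp only [mem_insert, mem_singleton] at this
        omega
  have hmax := apply_pred_mem_descents hσ hlt hne (by omega)
  have ha := hD hmax
  rw [mem_descents] at hmax
  simp only [mem_insert, mem_singleton] at ha
  have hk0 : σ k = 0 := by have := hrun k le_rfl (by omega); omega
  have hk1 : σ (k + 1) = 1 := by
    have := hrun (k + 1) (by omega) (by omega)
    have : σ (k + 1) ≠ σ k := σ.injective.ne (by omega)
    omega
  have h00 := hσ k
  have h01 := hσ (k + 1)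
  rw [hk0] at h00
  rw [hk1] at h01
  rw [mem_descents, zero_add] at h0
  omega

theorem sum_descents_ne_of_involutive {k : ℕ} (hσ : Involutive σ)
    (hlt : ∀ i < 2 * k, σ i < 2 * k) (hne : ∀ i < 2 * k, σ i ≠ i) :
    ∑ i ∈ descents σ (2 * k), (i + 1) ≠ k + 1 := by
  intro hsum
  have hk : 0 < k := Nat.pos_of_ne_zero fun hk => by simp [hk, descents] at hsum
  obtain ⟨d, hd, hkd⟩ := exists_mem_descents_ge hσ hlt hne (m := k - 1) (by omega)
  have hdk : d + 1 ≤ k + 1 := hsum ▸ single_le_sum (f := fun i => i + 1) (by simp) hd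
  have hother : ∀ e ∈ descents σ (2 * k), e ≠ d → d + 1 + (e + 1) ≤ k + 1 :=
    fun e he hed => hsum ▸ add_add_le_sum_succ hd he hed.symm
  obtain rfl | rfl : d = k ∨ d = k - 1 := by omega
  · have hD : descents σ (2 * d) ⊆ {d} := fun e he => by
      have := hother e he
      simp only [mem_singleton]
      omega
    have := two_mul_add_two_le_of_descents_subset_singleton hσ hlt hne (by omega) hD
    omega
  · obtain ⟨e, he, hek⟩ : ∃ e ∈ descents σ (2 * k), e ≠ k - 1 := by
      by_contra! h
      have := sum_le_sum_of_subset (f := fun i => i + 1) (fun e he => mem_singleton.mpr (h e he))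
      simp only [sum_singleton] at this
      omega
    obtain rfl : e = 0 := by have := hother e he hek; omega
    refine false_of_descents_subset_pair hσ hlt hne (by omega) (fun e he => ?_) he
    have := hother e he
    simp only [mem_insert, mem_singleton]
    omega

end Involution

theorem extendDomain_equivSubtype_apply {n i : ℕ} (π : Equiv.Perm (Fin n)) (hi : i < n) :
    π.extendDomain Fin.equivSubtype i = π ⟨i, hi⟩ := by
  rw [Equiv.Perm.extendDomain_apply_subtype π Fin.equivSubtype (b := i) hi]
  rfl

theorem majPerm_eq_sum_descents {n : ℕ} (π : Equiv.Perm (Fin n)) :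
    majPerm π = ∑ i ∈ descents (π.extendDomain Fin.equivSubtype) n, (i + 1) := by
  rw [descents, sum_filter]
  refine sum_congr rfl fun i hi => ?_
  by_cases h : i + 1 < n
  · rw [dif_pos h, extendDomain_equivSubtype_apply π h,
      extendDomain_equivSubtype_apply π (mem_range.mp hi)]
    simp only [h, true_and, Fin.lt_def]
  · simp [h]

/-- For `n = 2k`, no fixed-point-free involution in `S_n` has major index `k + 1`. -/
theorem no_fpf_involution_maj_k_add_one (n k : ℕ) (h : n = 2 * k) :
    ¬ ∃ π : Equiv.Perm (Fin n), π * π = 1 ∧ (∀ i, π i ≠ i) ∧ majPerm π = k + 1 := by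
  subst h
  rintro ⟨π, hinv, hfix, hmaj⟩
  have hσ : Involutive (π.extendDomain Fin.equivSubtype) := fun i => by
    rw [← Equiv.Perm.mul_apply, Equiv.Perm.extendDomain_mul, hinv,
      Equiv.Perm.extendDomain_one, Equiv.Perm.one_apply]
  have hlt : ∀ i < 2 * k, π.extendDomain Fin.equivSubtype i < 2 * k := fun i hi => by
    rw [extendDomain_equivSubtype_apply π hi]
    exact Fin.is_lt _
  have hne : ∀ i < 2 * k, π.extendDomain Fin.equivSubtype i ≠ i := fun i hi => by
    rw [extendDomain_equivSubtype_apply π hi]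
    exact Fin.val_ne_of_ne (hfix ⟨i, hi⟩)
  exact sum_descents_ne_of_involutive hσ hlt hne (majPerm_eq_sum_descents π ▸ hmaj)
end

section
/- Let n = 2k be even with k ≥ 2. There is no fixed-point-free involution π ∈ S_n with maj(π) = C(n,2) − 1. -/
set_option maxHeartbeats 2000000 in
private lemma fpf_aux (n : ℕ) (hn4 : 4 ≤ n) (π : Equiv.Perm (Fin n))
    (hinv : ∀ x, π (π x) = x) (hfpf : ∀ i, π i ≠ i)
    (hasc : π ⟨0, by omega⟩ < π ⟨1, by omega⟩)
    (hdesc : ∀ i, 1 ≤ i → ∀ (h2 : i + 1 < n),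
      π ⟨i + 1, h2⟩ < π ⟨i, Nat.lt_of_succ_lt h2⟩) : False := by
  have key : ∀ b, ∀ a, 1 ≤ a → a ≤ b → ∀ (hb : b < n) (ha : a < n),
      π ⟨b, hb⟩ ≤ π ⟨a, ha⟩ := by
    intro b
    induction b with
    | zero => intro a h1 h2 _ _; omega
    | succ b ih =>
      intro a h1 h2 hb ha
      rcases Nat.eq_or_lt_of_le h2 with rfl | hlt
      · exact le_refl _
      · have hab : a ≤ b := by omega
        have hb1 : 1 ≤ b := by omega
        have hd := hdesc b hb1 hb
        exact le_trans (le_of_lt hd) (ih a h1 hab (Nat.lt_of_succ_lt hb) ha)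
  have key' : ∀ i j : Fin n, 1 ≤ (j : ℕ) → (j : ℕ) ≤ (i : ℕ) → π i ≤ π j :=
    fun i j h1 h2 => key i.val j.val h1 h2 i.isLt j.isLt
  have hmax : ∀ i : Fin n, π i ≤ π ⟨1, by omega⟩ := by
    intro i
    rcases Nat.eq_zero_or_pos i.val with h0 | h1
    · have : i = ⟨0, by omega⟩ := Fin.ext h0
      rw [this]; exact le_of_lt hasc
    · exact key' i ⟨1, by omega⟩ le_rfl h1
  have htop : π ⟨1, by omega⟩ = ⟨n - 1, by omega⟩ := by
    obtain ⟨j, hj⟩ := π.surjective ⟨n - 1, by omega⟩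
    have h1 := hmax j
    rw [hj] at h1
    refine le_antisymm ?_ h1
    rw [Fin.le_def]
    exact Nat.le_sub_one_of_lt (π _).isLt
  have hbot : π ⟨n - 1, by omega⟩ = ⟨0, by omega⟩ := by
    obtain ⟨q, hq⟩ := π.surjective ⟨0, by omega⟩
    rcases Nat.eq_zero_or_pos q.val with h0 | h1
    · exact absurd (hq.trans (Fin.ext h0.symm : (⟨0, by omega⟩ : Fin n) = q)) (hfpf q)
    · have hle := key' ⟨n - 1, by omega⟩ q h1 (Nat.le_sub_one_of_lt q.isLt)
      have hle2 : π ⟨n - 1, by omega⟩ ≤ (⟨0, by omega⟩ : Fin n) :=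
        le_trans hle (le_of_eq hq)
      exact Fin.ext (Nat.le_zero.mp (Fin.le_def.mp hle2))
  have h2 := hinv ⟨1, by omega⟩
  have h3 := congrArg π htop
  have h1 : π ⟨n - 1, by omega⟩ = ⟨1, by omega⟩ := h3.symm.trans h2
  have h4 : (⟨0, by omega⟩ : Fin n) = ⟨1, by omega⟩ := hbot.symm.trans h1
  exact absurd h4 (by simp [Fin.ext_iff])



/-- For `n = 2k`, `k ≥ 2`, no fixed-point-free involution in `S_n` has major index
`C(n,2) - 1`. -/
theorem no_fpf_involution_maj_max_sub_one (n k : ℕ) (h : n = 2 * k) (hk : 2 ≤ k) :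
    ¬ ∃ π : Equiv.Perm (Fin n), π * π = 1 ∧ (∀ i, π i ≠ i) ∧
      majPerm π = n.choose 2 - 1 := by
  rintro ⟨π, hinv, hfpf, hmaj⟩
  have hn4 : 4 ≤ n := by omega
  set G : ℕ → ℕ := fun i => if h : i + 1 < n then
      (if π ⟨i + 1, h⟩ < π ⟨i, Nat.lt_of_succ_lt h⟩ then i + 1 else 0) else 0 with hGdef
  have hmajG : majPerm π = ∑ i ∈ Finset.range n, G i := rfl
  set F : ℕ → ℕ := fun i => if i + 1 < n then i + 1 else 0 with hFdef
  have hGF : ∀ i, G i ≤ F i := by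
    intro i
    simp only [hGdef, hFdef]
    by_cases h2 : i + 1 < n
    · rw [dif_pos h2, if_pos h2]; split <;> omega
    · rw [dif_neg h2, if_neg h2]
  -- sum of F
  have hC : 1 ≤ n.choose 2 := Nat.choose_pos (by omega)
  have hsumF : ∑ i ∈ Finset.range n, F i = n.choose 2 := by
    obtain ⟨m, rfl⟩ : ∃ m, n = m + 1 := ⟨n - 1, by omega⟩
    rw [Finset.sum_range_succ]
    have h1 : F m = 0 := by simp [hFdef]
    have h2 : ∀ i ∈ Finset.range m, F i = i + 1 := by
      intro i hi
      simp only [Finset.mem_range] at hi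
      simp only [hFdef]
      rw [if_pos (by omega)]
    rw [h1, Finset.sum_congr rfl h2]
    have h3 : ∑ i ∈ Finset.range (m + 1), i = ∑ i ∈ Finset.range m, (i + 1) + 0 :=
      Finset.sum_range_succ' _ m
    have h4 := Finset.sum_range_id_mul_two (m + 1)
    have h5 := Nat.choose_two_right (m + 1)
    omega
  -- descents at all positions i ≥ 1
  have hdesc : ∀ i, 1 ≤ i → ∀ (h2 : i + 1 < n),
      π ⟨i + 1, h2⟩ < π ⟨i, Nat.lt_of_succ_lt h2⟩ := by
    intro i hi1 h2
    by_contra hnd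
    have hGi : G i = 0 := by simp only [hGdef]; rw [dif_pos h2, if_neg hnd]
    have hFi : F i = i + 1 := by simp only [hFdef]; rw [if_pos h2]
    have hmem : i ∈ Finset.range n := Finset.mem_range.mpr (by omega)
    have e1 : F i + ∑ j ∈ (Finset.range n).erase i, F j = n.choose 2 := by
      rw [Finset.add_sum_erase _ _ hmem, hsumF]
    have e2 : G i + ∑ j ∈ (Finset.range n).erase i, G j = n.choose 2 - 1 := by
      rw [Finset.add_sum_erase _ _ hmem, ← hmajG, hmaj]
    have e3 : ∑ j ∈ (Finset.range n).erase i, G j ≤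
        ∑ j ∈ (Finset.range n).erase i, F j :=
      Finset.sum_le_sum fun j _ => hGF j
    omega
  -- ascent at position 0
  have h0n : (0 : ℕ) + 1 < n := by omega
  have hasc : π ⟨0, Nat.lt_of_succ_lt h0n⟩ < π ⟨1, h0n⟩ := by
    rcases lt_trichotomy (π ⟨0, Nat.lt_of_succ_lt h0n⟩) (π ⟨1, h0n⟩) with hlt | heq | hgt
    · exact hlt
    · exact absurd (π.injective heq) (by simp [Fin.ext_iff])
    · exfalso
      have hall : ∀ i ∈ Finset.range n, G i = F i := by
        intro i _
        by_cases h2 : i + 1 < n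
        · rcases Nat.eq_zero_or_pos i with rfl | hi1
          · simp only [hGdef, hFdef]
            rw [dif_pos h2, if_pos h2, if_pos hgt]
          · simp only [hGdef, hFdef]
            rw [dif_pos h2, if_pos h2, if_pos (hdesc i hi1 h2)]
        · simp only [hGdef, hFdef]
          rw [dif_neg h2, if_neg h2]
      have : ∑ i ∈ Finset.range n, G i = n.choose 2 := by
        rw [Finset.sum_congr rfl hall, hsumF]
      rw [← hmajG, hmaj] at this
      omega
  have hinv' : ∀ x, π (π x) = x := by
    intro x
    have := congrArg (fun σ : Equiv.Perm (Fin n) => σ x) hinv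
    simpa [Equiv.Perm.mul_apply] using this
  exact fpf_aux n hn4 π hinv' hfpf hasc hdesc
end

section
/- Let n = 2k be even. There is no standard Young tableau T of size n, all of whose columns have even length, with maj(T) = k + 1. -/
namespace SYTAux

open Finset

variable {μ : YoungDiagram}

noncomputable def cell (T : SYT μ) (v : ℕ) : ℕ × ℕ :=
  if h : ∃ c ∈ μ.cells, T.entry c = v then h.choose else (0, 0)

lemma cell_spec (T : SYT μ) {v : ℕ} (hv : v ∈ Finset.Icc 1 μ.card) :
    cell T v ∈ μ.cells ∧ T.entry (cell T v) = v := by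
  have h := T.surjOn v hv
  rw [cell, dif_pos h]
  exact ⟨h.choose_spec.1, h.choose_spec.2⟩

lemma cell_eq (T : SYT μ) {v : ℕ} {c : ℕ × ℕ} (hc : c ∈ μ.cells) (he : T.entry c = v) :
    cell T v = c := by
  have hv : v ∈ Finset.Icc 1 μ.card := he ▸ T.mapsTo c hc
  obtain ⟨h1, h2⟩ := cell_spec T hv
  exact T.injOn _ h1 _ hc (h2.trans he.symm)

noncomputable def rowOf (T : SYT μ) (v : ℕ) : ℕ := (cell T v).1
noncomputable def colOf (T : SYT μ) (v : ℕ) : ℕ := (cell T v).2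

lemma cell_mem_mu (T : SYT μ) {v : ℕ} (hv : v ∈ Finset.Icc 1 μ.card) :
    (rowOf T v, colOf T v) ∈ μ := by
  rw [rowOf, colOf, Prod.mk.eta]
  exact (μ.mem_cells _).1 (cell_spec T hv).1

lemma des_iff (T : SYT μ) (i : ℕ) :
    T.des i ↔ 1 ≤ i ∧ i + 1 ≤ μ.card ∧ rowOf T i < rowOf T (i + 1) := by
  constructor
  · rintro ⟨c, hc, d, hd, hec, hed, hlt⟩
    have hi : i ∈ Finset.Icc 1 μ.card := hec ▸ T.mapsTo c hc
    have hi1 : i + 1 ∈ Finset.Icc 1 μ.card := hed ▸ T.mapsTo d hd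
    simp only [Finset.mem_Icc] at hi hi1
    refine ⟨hi.1, hi1.2, ?_⟩
    rw [rowOf, rowOf, cell_eq T hc hec, cell_eq T hd hed]
    exact hlt
  · rintro ⟨h1, h2, h3⟩
    obtain ⟨hc, hec⟩ := cell_spec T (Finset.mem_Icc.2 ⟨h1, by omega⟩)
    obtain ⟨hd, hed⟩ := cell_spec T (Finset.mem_Icc.2 ⟨by omega, h2⟩)
    exact ⟨_, hc, _, hd, hec, hed, h3⟩

lemma cell_one (T : SYT μ) (h1 : 1 ≤ μ.card) : cell T 1 = (0, 0) := by
  obtain ⟨hc, he⟩ := cell_spec T (Finset.mem_Icc.2 ⟨le_rfl, h1⟩)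
  set c := cell T 1 with hcdef
  have hcμ : (c.1, c.2) ∈ μ := by rw [Prod.mk.eta]; exact (μ.mem_cells _).1 hc
  have hr : c.1 = 0 := by
    by_contra hr
    have hm : (0, c.2) ∈ μ := μ.up_left_mem (Nat.zero_le _) le_rfl hcμ
    have h2 := T.col_lt (Nat.pos_of_ne_zero hr) hcμ
    have h3 := T.mapsTo _ ((μ.mem_cells _).2 hm)
    simp only [Finset.mem_Icc] at h3
    rw [Prod.mk.eta] at h2
    omega
  have hcc : c.2 = 0 := by
    by_contra hcc
    have hm : (c.1, 0) ∈ μ := μ.up_left_mem le_rfl (Nat.zero_le _) hcμ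
    have h2 := T.row_lt (Nat.pos_of_ne_zero hcc) hcμ
    have h3 := T.mapsTo _ ((μ.mem_cells _).2 hm)
    simp only [Finset.mem_Icc] at h3
    rw [Prod.mk.eta] at h2
    omega
  have he2 := Prod.mk.eta (p := c)
  rw [hr, hcc] at he2
  exact he2.symm

lemma exists_increase (f : ℕ → ℕ) : ∀ b a, a ≤ b → f a < f b →
    ∃ i, a ≤ i ∧ i < b ∧ f i < f (i + 1) := by
  intro b
  induction b with
  | zero =>
    intro a h1 h2
    have : a = 0 := Nat.le_zero.1 h1
    subst this
    exact absurd h2 (lt_irrefl _)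
  | succ b ih =>
    intro a h1 h2
    by_cases hab : a ≤ b
    · rcases Nat.lt_or_ge (f b) (f (b + 1)) with hf | hf
      · exact ⟨b, hab, Nat.lt_succ_self b, hf⟩
      · obtain ⟨i, h3, h4, h5⟩ := ih a hab (lt_of_lt_of_le h2 hf)
        exact ⟨i, h3, by omega, h5⟩
    · have ha : a = b + 1 := by omega
      subst ha
      exact absurd h2 (lt_irrefl _)

open scoped Classical in
noncomputable def desSet (T : SYT μ) : Finset ℕ := (Finset.range μ.card).filter T.des

lemma mem_desSet (T : SYT μ) {i : ℕ} : i ∈ desSet T ↔ i < μ.card ∧ T.des i := by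
  simp [desSet]

open scoped Classical in
lemma maj_eq_sum (T : SYT μ) : T.maj = ∑ i ∈ desSet T, i := by
  rw [SYT.maj, desSet, Finset.sum_filter]

lemma maj_eq_cnt (T : SYT μ) :
    T.maj = ∑ v ∈ Finset.Icc 1 μ.card, ((desSet T).filter (fun i => v ≤ i)).card := by
  classical
  rw [maj_eq_sum]
  have hc : ∀ v, ((desSet T).filter (fun i => v ≤ i)).card
      = ∑ i ∈ desSet T, if v ≤ i then 1 else 0 := fun v => Finset.card_filter _ _
  simp_rw [hc]
  rw [Finset.sum_comm]
  refine Finset.sum_congr rfl fun i hi => ?_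
  have hi' : i < μ.card := ((mem_desSet T).1 hi).1
  have h2 : (Finset.Icc 1 μ.card).filter (fun v => v ≤ i) = Finset.Icc 1 i := by
    ext x
    simp only [Finset.mem_filter, Finset.mem_Icc]
    omega
  rw [← Finset.card_filter, h2, Nat.card_Icc]
  omega

lemma le_cnt (T : SYT μ) (m : ℕ) : ∀ v, 1 ≤ v → v ≤ μ.card →
    rowOf T v + m < μ.colLen (colOf T v) →
    m ≤ ((desSet T).filter (fun i => v ≤ i)).card := by
  classical
  induction m with
  | zero => intro v _ _ _; exact Nat.zero_le _
  | succ m ih =>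
    intro v hv1 hvn hcol
    have hmem : (rowOf T v + 1, colOf T v) ∈ μ := by
      rw [YoungDiagram.mem_iff_lt_colLen]; omega
    set w := T.entry (rowOf T v + 1, colOf T v) with hw
    have hwmem : w ∈ Finset.Icc 1 μ.card := T.mapsTo _ ((μ.mem_cells _).2 hmem)
    simp only [Finset.mem_Icc] at hwmem
    have hvw : v < w := by
      have h1 := T.col_lt (show rowOf T v < rowOf T v + 1 by omega) hmem
      have h2 : T.entry (rowOf T v, colOf T v) = v := by
        rw [rowOf, colOf, Prod.mk.eta]
        exact (cell_spec T (Finset.mem_Icc.2 ⟨hv1, hvn⟩)).2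
      omega
    have hcw : cell T w = (rowOf T v + 1, colOf T v) :=
      cell_eq T ((μ.mem_cells _).2 hmem) rfl
    have hroww : rowOf T w = rowOf T v + 1 := by rw [rowOf, hcw]
    have hcolw : colOf T w = colOf T v := by rw [colOf, hcw]
    have h2 := ih w (by omega) hwmem.2 (by rw [hroww, hcolw]; omega)
    obtain ⟨i, hi1, hi2, hi3⟩ := exists_increase (rowOf T) w v (le_of_lt hvw) (by omega)
    have hdes : T.des i := (des_iff T i).2 ⟨by omega, by omega, hi3⟩
    have hiD : i ∈ (desSet T).filter (fun j => v ≤ j) := by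
      rw [Finset.mem_filter, mem_desSet]
      exact ⟨⟨by omega, hdes⟩, hi1⟩
    have hnot : i ∉ (desSet T).filter (fun j => w ≤ j) := by
      rw [Finset.mem_filter]
      push_neg
      intro _
      omega
    have hsub : insert i ((desSet T).filter (fun j => w ≤ j))
        ⊆ (desSet T).filter (fun j => v ≤ j) := by
      intro y hy
      rcases Finset.mem_insert.1 hy with hy | hy
      · subst hy; exact hiD
      · rw [Finset.mem_filter] at hy ⊢
        exact ⟨hy.1, by omega⟩
    calc m + 1 ≤ ((desSet T).filter (fun j => w ≤ j)).card + 1 := by omega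
      _ = (insert i ((desSet T).filter (fun j => w ≤ j))).card :=
          (Finset.card_insert_of_notMem hnot).symm
      _ ≤ _ := Finset.card_le_card hsub

lemma card_half (hcols : ∀ j, Even (μ.colLen j)) :
    2 * (μ.cells.filter fun p : ℕ × ℕ => 2 * p.1 < μ.colLen p.2).card = μ.card := by
  classical
  have hb : (μ.cells.filter fun p : ℕ × ℕ => 2 * p.1 < μ.colLen p.2).card
      = (μ.cells.filter fun p : ℕ × ℕ => ¬ 2 * p.1 < μ.colLen p.2).card := by
    apply Finset.card_bij' (fun p _ => (μ.colLen p.2 - 1 - p.1, p.2))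
        (fun p _ => (μ.colLen p.2 - 1 - p.1, p.2))
    · rintro ⟨r, c⟩ hp
      simp only [Finset.mem_filter, μ.mem_cells, YoungDiagram.mem_iff_lt_colLen] at hp ⊢
      obtain ⟨t, ht⟩ := hcols c
      omega
    · rintro ⟨r, c⟩ hp
      simp only [Finset.mem_filter, μ.mem_cells, YoungDiagram.mem_iff_lt_colLen] at hp ⊢
      obtain ⟨t, ht⟩ := hcols c
      omega
    · rintro ⟨r, c⟩ hp
      simp only [Finset.mem_filter, μ.mem_cells, YoungDiagram.mem_iff_lt_colLen] at hp
      obtain ⟨t, ht⟩ := hcols c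
      simp only [Prod.mk.injEq]
      exact ⟨by omega, trivial⟩
    · rintro ⟨r, c⟩ hp
      simp only [Finset.mem_filter, μ.mem_cells, YoungDiagram.mem_iff_lt_colLen] at hp
      obtain ⟨t, ht⟩ := hcols c
      simp only [Prod.mk.injEq]
      exact ⟨by omega, trivial⟩
  have hsum := Finset.card_filter_add_card_filter_not
    (s := μ.cells) (p := fun p : ℕ × ℕ => 2 * p.1 < μ.colLen p.2)
  rw [YoungDiagram.card]
  omega

lemma card_halfE (T : SYT μ) (hcols : ∀ j, Even (μ.colLen j)) :
    2 * ((Finset.Icc 1 μ.card).filter fun v => 2 * rowOf T v < μ.colLen (colOf T v)).card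
      = μ.card := by
  classical
  have hbij : ((Finset.Icc 1 μ.card).filter fun v => 2 * rowOf T v < μ.colLen (colOf T v)).card
      = (μ.cells.filter fun p : ℕ × ℕ => 2 * p.1 < μ.colLen p.2).card := by
    apply Finset.card_bij (fun v _ => cell T v)
    · intro v hv
      rw [Finset.mem_filter] at hv ⊢
      exact ⟨(cell_spec T hv.1).1, hv.2⟩
    · intro a ha b hb hab
      rw [Finset.mem_filter] at ha hb
      have h1 := (cell_spec T ha.1).2
      have h2 := (cell_spec T hb.1).2
      rw [hab] at h1
      omega
    · intro p hp
      rw [Finset.mem_filter] at hp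
      have hv := T.mapsTo p hp.1
      refine ⟨T.entry p, ?_, cell_eq T hp.1 rfl⟩
      rw [Finset.mem_filter]
      refine ⟨hv, ?_⟩
      rw [rowOf, colOf, cell_eq T hp.1 rfl]
      exact hp.2
  rw [hbij]
  exact card_half hcols

end SYTAux

open SYTAux in
/-- For `n = 2k`, no standard Young tableau of size `n` all of whose columns have
even length has major index `k + 1`. -/
theorem no_even_col_syt_maj_k_add_one (n k : ℕ) (h : n = 2 * k)
    (μ : YoungDiagram) (hcard : μ.card = n) (hcols : ∀ j, Even (μ.colLen j))
    (T : SYT μ) : T.maj ≠ k + 1 := by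
  classical
  intro hmaj
  subst h
  rcases Nat.eq_zero_or_pos k with hk0 | hk
  · subst hk0
    rw [maj_eq_sum] at hmaj
    have hD : desSet T = ∅ :=
      Finset.eq_empty_of_forall_notMem (fun i hi => by
        have := (mem_desSet T).1 hi; omega)
    rw [hD, Finset.sum_empty] at hmaj
    omega
  have hn1 : 1 ≤ μ.card := by omega
  have hcell1 := cell_one T hn1
  have hrow1 : rowOf T 1 = 0 := by rw [rowOf, hcell1]
  have hcol1 : colOf T 1 = 0 := by rw [colOf, hcell1]
  by_cases h20 : (2, 0) ∈ μ
  · -- some column has length ≥ 4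
    have hL0 : 4 ≤ μ.colLen 0 := by
      have h3 := YoungDiagram.mem_iff_lt_colLen.1 h20
      obtain ⟨t, ht⟩ := hcols 0
      omega
    have hSv := card_halfE T hcols
    set Sv := (Finset.Icc 1 μ.card).filter
        (fun v => 2 * rowOf T v < μ.colLen (colOf T v)) with hSvdef
    have h1mem : (1 : ℕ) ∈ Sv := by
      rw [hSvdef, Finset.mem_filter, Finset.mem_Icc, hrow1, hcol1]
      omega
    have hbound : ∀ v ∈ Sv,
        (if v = 1 then 3 else 1) ≤ ((desSet T).filter (fun i => v ≤ i)).card := by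
      intro v hv
      rw [hSvdef, Finset.mem_filter, Finset.mem_Icc] at hv
      by_cases h1 : v = 1
      · subst h1
        rw [if_pos rfl]
        refine le_cnt T 3 1 le_rfl hn1 ?_
        rw [hrow1, hcol1]
        omega
      · rw [if_neg h1]
        refine le_cnt T 1 v hv.1.1 hv.1.2 ?_
        obtain ⟨t, ht⟩ := hcols (colOf T v)
        omega
    have hsum1 : ∑ v ∈ Sv, (if v = 1 then 3 else 1) = Sv.card + 2 := by
      have hcg : ∀ v ∈ Sv, (if v = 1 then 3 else 1) = 1 + (if v = 1 then 2 else 0) := by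
        intro v _
        by_cases h1 : v = 1 <;> simp [h1]
      rw [Finset.sum_congr rfl hcg, Finset.sum_add_distrib, Finset.sum_const,
        Finset.sum_ite_eq' Sv 1 (fun _ => 2), if_pos h1mem]
      simp
    have hfinal : k + 2 ≤ T.maj := by
      rw [maj_eq_cnt]
      calc k + 2 = Sv.card + 2 := by omega
        _ = ∑ v ∈ Sv, (if v = 1 then 3 else 1) := hsum1.symm
        _ ≤ ∑ v ∈ Sv, ((desSet T).filter (fun i => v ≤ i)).card := Finset.sum_le_sum hbound
        _ ≤ ∑ v ∈ Finset.Icc 1 μ.card, ((desSet T).filter (fun i => v ≤ i)).card :=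
            Finset.sum_le_sum_of_subset (Finset.filter_subset _ _)
    omega
  · -- all columns have length ≤ 2, so the shape is (k, k)
    have hcol2 : ∀ jj, μ.colLen jj ≤ 2 := by
      intro jj
      by_contra hc
      push_neg at hc
      exact h20 (μ.up_left_mem le_rfl (Nat.zero_le jj)
        (YoungDiagram.mem_iff_lt_colLen.2 (by omega)))
    have hrow_le : ∀ v, 1 ≤ v → v ≤ μ.card → rowOf T v ≤ 1 := by
      intro v h1 h2
      have hm := cell_mem_mu T (Finset.mem_Icc.2 ⟨h1, h2⟩)
      have h3 := YoungDiagram.mem_iff_lt_colLen.1 hm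
      have h4 := hcol2 (colOf T v)
      omega
    set R1 := (Finset.Icc 1 μ.card).filter (fun v => rowOf T v = 1) with hR1def
    have hR1card : R1.card = k := by
      have hfe : (Finset.Icc 1 μ.card).filter
          (fun v => ¬ 2 * rowOf T v < μ.colLen (colOf T v)) = R1 := by
        rw [hR1def]
        apply Finset.filter_congr
        intro v hv
        rw [Finset.mem_Icc] at hv
        have hm := cell_mem_mu T (Finset.mem_Icc.2 hv)
        have h1 := YoungDiagram.mem_iff_lt_colLen.1 hm
        have h2 := hcol2 (colOf T v)
        obtain ⟨t, ht⟩ := hcols (colOf T v)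
        constructor <;> intro hx <;> omega
      have hnn := Finset.card_filter_add_card_filter_not
        (s := Finset.Icc 1 μ.card) (p := fun v => 2 * rowOf T v < μ.colLen (colOf T v))
      rw [hfe] at hnn
      have hS := card_halfE T hcols
      rw [Nat.card_Icc] at hnn
      omega
    have hrown : rowOf T μ.card = 1 := by
      have hm := cell_mem_mu T (Finset.mem_Icc.2 ⟨hn1, le_rfl⟩)
      have hnot : (rowOf T μ.card + 1, colOf T μ.card) ∉ μ := by
        intro hmem
        have h1 := T.col_lt (show rowOf T μ.card < rowOf T μ.card + 1 by omega) hmem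
        have h2 := T.mapsTo _ ((μ.mem_cells _).2 hmem)
        rw [Finset.mem_Icc] at h2
        have h3 : T.entry (rowOf T μ.card, colOf T μ.card) = μ.card := by
          rw [rowOf, colOf, Prod.mk.eta]
          exact (cell_spec T (Finset.mem_Icc.2 ⟨hn1, le_rfl⟩)).2
        omega
      have h4 := YoungDiagram.mem_iff_lt_colLen.1 hm
      have h5 : ¬ (rowOf T μ.card + 1 < μ.colLen (colOf T μ.card)) :=
        fun hx => hnot (YoungDiagram.mem_iff_lt_colLen.2 hx)
      have h6 := hcol2 (colOf T μ.card)
      obtain ⟨t, ht⟩ := hcols (colOf T μ.card)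
      omega
    have hR1ne : R1.Nonempty := Finset.card_pos.1 (by rw [hR1card]; omega)
    obtain ⟨v1, hv1m⟩ := hR1ne
    rw [hR1def, Finset.mem_filter, Finset.mem_Icc] at hv1m
    obtain ⟨⟨hv11, hv12⟩, hv13⟩ := hv1m
    obtain ⟨i0, hi01, hi02, hi03⟩ :=
      exists_increase (rowOf T) v1 1 hv11 (by rw [hrow1, hv13]; omega)
    have hdes0 : T.des i0 := (des_iff T i0).2 ⟨hi01, by omega, hi03⟩
    have hne : (desSet T).Nonempty := ⟨i0, (mem_desSet T).2 ⟨by omega, hdes0⟩⟩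
    set j := (desSet T).max' hne with hjdef
    have hjD : j ∈ desSet T := Finset.max'_mem _ hne
    have hdesj : T.des j := ((mem_desSet T).1 hjD).2
    have hjfacts := (des_iff T j).1 hdesj
    have no_des_after : ∀ i, j < i → ¬ T.des i := by
      intro i hji hdes
      have hiD : i ∈ desSet T := (mem_desSet T).2
        ⟨by have := (des_iff T i).1 hdes; omega, hdes⟩
      have := Finset.le_max' _ i hiD
      omega
    have anti : ∀ d i, i + d = μ.card → j + 1 ≤ i → 1 ≤ rowOf T i := by
      intro d
      induction d with
      | zero =>
        intro i hi hji
        have hieq : i = μ.card := by omega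
        subst hieq
        omega
      | succ d ih =>
        intro i hi hji
        have h1 : 1 ≤ rowOf T (i + 1) := ih (i + 1) (by omega) (by omega)
        have hnd : ¬ T.des i := no_des_after i (by omega)
        rw [des_iff] at hnd
        push_neg at hnd
        have h2 := hnd (by omega) (by omega)
        omega
    have hsub1 : Finset.Icc (j + 1) μ.card ⊆ R1 := by
      intro v hv
      rw [Finset.mem_Icc] at hv
      rw [hR1def, Finset.mem_filter, Finset.mem_Icc]
      have h1 := anti (μ.card - v) v (by omega) hv.1
      have h2 := hrow_le v (by omega) hv.2
      exact ⟨⟨by omega, hv.2⟩, by omega⟩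
    have hjk : k ≤ j := by
      have hcc := Finset.card_le_card hsub1
      rw [Nat.card_Icc] at hcc
      omega
    by_cases hsing : ∀ x ∈ desSet T, x = j
    · have hDsing : desSet T = {j} := Finset.eq_singleton_iff_unique_mem.2 ⟨hjD, hsing⟩
      have hmajj : T.maj = j := by rw [maj_eq_sum, hDsing, Finset.sum_singleton]
      have before : ∀ i, 1 ≤ i → i ≤ j → rowOf T i = 0 := by
        intro i
        induction i with
        | zero => intro h1 _; omega
        | succ i ih =>
          intro h1 h2
          rcases Nat.eq_zero_or_pos i with h0 | h0
          · subst h0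
            simpa using hrow1
          · have hprev := ih h0 (by omega)
            have hnd : ¬ T.des i := by
              intro hd
              have hiD : i ∈ desSet T := (mem_desSet T).2
                ⟨by have := (des_iff T i).1 hd; omega, hd⟩
              have := hsing i hiD
              omega
            rw [des_iff] at hnd
            push_neg at hnd
            have h3 := hnd (by omega) (by omega)
            have h4 := hrow_le (i + 1) (by omega) (by omega)
            omega
      have hsub2 : R1 ⊆ Finset.Icc (j + 1) μ.card := by
        intro v hv
        rw [hR1def, Finset.mem_filter, Finset.mem_Icc] at hv
        rw [Finset.mem_Icc]
        rcases Nat.lt_or_ge j v with hlt | hge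
        · exact ⟨hlt, hv.1.2⟩
        · have := before v hv.1.1 hge
          omega
      have hcc := Finset.card_le_card hsub2
      rw [Nat.card_Icc] at hcc
      omega
    · push_neg at hsing
      obtain ⟨x, hxD, hxj⟩ := hsing
      have hxle : x ≤ (desSet T).max' hne := Finset.le_max' _ x hxD
      have hx1 : 1 ≤ x := by
        have := (des_iff T x).1 ((mem_desSet T).1 hxD).2
        omega
      have hpair : x + j ≤ T.maj := by
        rw [maj_eq_sum]
        have hsubp : ({x, j} : Finset ℕ) ⊆ desSet T := by
          intro y hy
          rcases Finset.mem_insert.1 hy with hy | hy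
          · subst hy; exact hxD
          · rw [Finset.mem_singleton] at hy; subst hy; exact hjD
        calc x + j = ∑ i ∈ ({x, j} : Finset ℕ), i := (Finset.sum_pair (f := fun i => i) hxj).symm
          _ ≤ ∑ i ∈ desSet T, i := Finset.sum_le_sum_of_subset hsubp
      have hx1e : x = 1 := by omega
      have hje : j = k := by omega
      have hrow2 : rowOf T 2 = 1 := by
        have hdx : T.des x := ((mem_desSet T).1 hxD).2
        rw [hx1e] at hdx
        have h1 := (des_iff T 1).1 hdx
        have h2 := hrow_le 2 (by omega) (by omega)
        have h3 : rowOf T (1 + 1) = rowOf T 2 := rfl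
        omega
      have hk2 : 2 ≤ k := by omega
      have h2R : (2 : ℕ) ∈ R1 := by
        rw [hR1def, Finset.mem_filter, Finset.mem_Icc]
        exact ⟨⟨by omega, by omega⟩, hrow2⟩
      have hnotin : (2 : ℕ) ∉ Finset.Icc (j + 1) μ.card := by
        rw [Finset.mem_Icc]
        omega
      have hsub3 : insert 2 (Finset.Icc (j + 1) μ.card) ⊆ R1 := by
        intro y hy
        rcases Finset.mem_insert.1 hy with hy | hy
        · subst hy; exact h2R
        · exact hsub1 hy
      have hcard3 := Finset.card_le_card hsub3
      rw [Finset.card_insert_of_notMem hnotin, Nat.card_Icc] at hcard3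
      omega
end

section
/- For every partition λ of n ≥ 6 with λ ≠ (n) and λ ≠ (1^n), one has C(n,2) − b(λ') − b(λ) ≥ 4. Moreover, if λ is a rectangle (all parts equal) with at least two parts, then C(n,2) − b(λ') − b(λ) ≥ 6. -/
/-! ### Auxiliary lemmas -/

/-- Decompose a sum over the cells of a Young diagram into rows. -/
lemma yd_sum_cells (μ : YoungDiagram) (g : ℕ × ℕ → ℕ) (m : ℕ) (hm : μ.colLen 0 ≤ m) :
    ∑ c ∈ μ.cells, g c = ∑ i ∈ Finset.range m, ∑ j ∈ Finset.range (μ.rowLen i), g (i, j) := by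
  have hcells : μ.cells = (Finset.range m).biUnion μ.row := by
    ext c
    obtain ⟨i, j⟩ := c
    simp only [Finset.mem_biUnion, Finset.mem_range, YoungDiagram.mem_row_iff,
      YoungDiagram.mem_cells]
    constructor
    · intro hc
      refine ⟨i, ?_, hc, rfl⟩
      have h0 : (i, 0) ∈ μ := μ.up_left_mem le_rfl (Nat.zero_le _) hc
      have := YoungDiagram.mem_iff_lt_colLen.mp h0
      omega
    · rintro ⟨a, -, hc, rfl⟩
      exact hc
  have hdisj : (↑(Finset.range m) : Set ℕ).PairwiseDisjoint μ.row := by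
    intro a _ b _ hab
    simp only [Function.onFun]
    rw [Finset.disjoint_left]
    intro c hca hcb
    rw [YoungDiagram.mem_row_iff] at hca hcb
    exact hab (hca.2 ▸ hcb.2)
  rw [hcells, Finset.sum_biUnion hdisj]
  refine Finset.sum_congr rfl fun i _ => ?_
  rw [YoungDiagram.row_eq_prod, Finset.sum_product, Finset.sum_singleton]

lemma yd_colLen_le_card (μ : YoungDiagram) (j : ℕ) : μ.colLen j ≤ μ.card := by
  rw [YoungDiagram.colLen_eq_card]
  exact Finset.card_le_card (Finset.filter_subset _ _)

lemma yd_card_transpose (μ : YoungDiagram) : μ.transpose.card = μ.card := by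
  simp [YoungDiagram.transpose, YoungDiagram.card]

lemma yd_sum_transpose (μ : YoungDiagram) (g : ℕ × ℕ → ℕ) :
    ∑ c ∈ μ.transpose.cells, g c = ∑ c ∈ μ.cells, g c.swap := by
  rw [show μ.transpose.cells = μ.cells.map (Equiv.prodComm ℕ ℕ).toEmbedding from rfl,
    Finset.sum_map]
  rfl

/-- Sum of all row lengths is the number of cells. -/
lemma yd_card_eq_sum (μ : YoungDiagram) (m : ℕ) (hm : μ.colLen 0 ≤ m) :
    μ.card = ∑ i ∈ Finset.range m, μ.rowLen i := by
  have := yd_sum_cells μ (fun _ => 1) m hm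
  simpa [YoungDiagram.card] using this

lemma yd_bstat_eq (μ : YoungDiagram) : bstat μ = ∑ c ∈ μ.cells, c.1 := by
  rw [bstat, yd_sum_cells μ (fun c => c.1) μ.card (yd_colLen_le_card μ 0)]
  refine Finset.sum_congr rfl fun i _ => ?_
  simp [Finset.sum_const, mul_comm]

/-- If the first row is not everything, the second row is nonempty. -/
lemma yd_row1_pos (ν : YoungDiagram) (n : ℕ) (hn : 0 < n) (hcard : ν.card = n)
    (hrow : ν.rowLen 0 ≠ n) : 1 ≤ ν.rowLen 1 := by
  by_contra h
  push_neg at h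
  have h1 : ν.rowLen 1 = 0 := by omega
  have : ν.card = ν.rowLen 0 := by
    rw [yd_card_eq_sum ν ν.card (yd_colLen_le_card ν 0)]
    rw [Finset.sum_eq_single 0]
    · intro i _ hi
      have := ν.rowLen_anti 1 i (by omega)
      omega
    · intro h0
      simp only [Finset.mem_range, not_lt, Nat.le_zero] at h0
      omega
  omega

/-- The square of a sum, in terms of partial sums. -/
lemma sq_sum_eq (f : ℕ → ℕ) (m : ℕ) :
    (∑ i ∈ Finset.range m, f i) * (∑ i ∈ Finset.range m, f i) =
      (∑ i ∈ Finset.range m, f i * f i) +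
        2 * ∑ i ∈ Finset.range m, f i * ∑ j ∈ Finset.range i, f j := by
  induction m with
  | zero => simp
  | succ m ih =>
    simp only [Finset.sum_range_succ]
    zify at ih ⊢
    linear_combination ih

lemma gauss2 (m : ℕ) : 2 * (∑ j ∈ Finset.range m, j) + m = m * m := by
  induction m with
  | zero => simp
  | succ m ih =>
    simp only [Finset.sum_range_succ]
    zify at ih ⊢
    linear_combination ih

/-- For `λ ⊢ n ≥ 6` with `λ ≠ (n)` and `λ ≠ (1^n)`, one has
`C(n,2) - b(λ') - b(λ) ≥ 4`; moreover if `λ` is a rectangle with at least two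
parts then `C(n,2) - b(λ') - b(λ) ≥ 6`. -/
theorem gap_ge_four (n : ℕ) (hn : 6 ≤ n) (μ : YoungDiagram) (hcard : μ.card = n)
    (hrow : μ.rowLen 0 ≠ n) (hcol : μ.colLen 0 ≠ n) :
    bstat μ + bstat μ.transpose + 4 ≤ n.choose 2 ∧
    ((∃ a b : ℕ, 2 ≤ b ∧ ∀ i, μ.rowLen i = if i < b then a else 0) →
      bstat μ + bstat μ.transpose + 6 ≤ n.choose 2) := by
  set f : ℕ → ℕ := μ.rowLen with hf
  -- basic positivity facts
  have hcolcard : μ.colLen 0 ≤ n := hcard ▸ yd_colLen_le_card μ 0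
  have hf1 : 1 ≤ f 1 := yd_row1_pos μ n (by omega) hcard hrow
  have hf0 : 2 ≤ f 0 := by
    have ht1 : 1 ≤ μ.transpose.rowLen 1 := by
      refine yd_row1_pos μ.transpose n (by omega) ?_ ?_
      · rw [yd_card_transpose]; exact hcard
      · rw [YoungDiagram.rowLen_transpose]; exact hcol
    have h2 : ((0:ℕ), (1:ℕ)) ∈ μ := by
      have h3 : ((1:ℕ), (0:ℕ)) ∈ μ.transpose := YoungDiagram.mem_iff_lt_rowLen.mpr (by omega)
      simpa using h3
    have h4 : 1 < f 0 := YoungDiagram.mem_iff_lt_rowLen.mp h2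
    omega
  have hf10 : f 1 ≤ f 0 := μ.rowLen_anti 0 1 (by omega)
  -- key sums
  have hsum : ∑ i ∈ Finset.range n, f i = n := by
    rw [← yd_card_eq_sum μ n hcolcard, hcard]
  have hb : bstat μ = ∑ i ∈ Finset.range n, i * f i := by rw [bstat, hcard]
  have hsq : n * n = (∑ i ∈ Finset.range n, f i * f i) +
      2 * ∑ i ∈ Finset.range n, f i * ∑ j ∈ Finset.range i, f j := by
    have h := sq_sum_eq f n
    rw [hsum] at h
    exact h
  -- bstat of the transpose
  have hT : 2 * bstat μ.transpose + n = ∑ i ∈ Finset.range n, f i * f i := by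
    have h1 : bstat μ.transpose = ∑ i ∈ Finset.range n, ∑ j ∈ Finset.range (f i), j := by
      rw [yd_bstat_eq, yd_sum_transpose μ (fun c => c.1)]
      have := yd_sum_cells μ (fun c => c.2) n hcolcard
      simpa using this
    calc 2 * bstat μ.transpose + n
        = (∑ i ∈ Finset.range n, 2 * ∑ j ∈ Finset.range (f i), j)
            + ∑ i ∈ Finset.range n, f i := by rw [h1, Finset.mul_sum, hsum]
      _ = ∑ i ∈ Finset.range n, (2 * ∑ j ∈ Finset.range (f i), j + f i) :=
          Finset.sum_add_distrib.symm
      _ = ∑ i ∈ Finset.range n, f i * f i :=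
          Finset.sum_congr rfl fun i _ => gauss2 (f i)
  -- the lower-bound term
  set R : ℕ := ∑ i ∈ Finset.Ico 2 n, f i with hR
  set C : ℕ := f 1 * (f 0 - 1) + (f 0 + f 1 - 2) * R with hC
  have hsplit : ∀ g : ℕ → ℕ, ∑ i ∈ Finset.range n, g i =
      g 0 + g 1 + ∑ i ∈ Finset.Ico 2 n, g i := by
    intro g
    rw [Finset.range_eq_Ico, ← Finset.sum_Ico_consecutive g (by omega : 0 ≤ 2) (by omega : 2 ≤ n),
      ← Finset.range_eq_Ico, Finset.sum_range_succ, Finset.sum_range_one]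
  have hnR : f 0 + f 1 + R = n := by
    rw [hR, ← hsplit f, hsum]
  -- main lower bound on the cross term
  have hP : (∑ i ∈ Finset.range n, i * f i) + C ≤
      ∑ i ∈ Finset.range n, f i * ∑ j ∈ Finset.range i, f j := by
    have key : ∀ i ∈ Finset.range n,
        i * f i + (if i = 0 then 0 else if i = 1 then f 1 * (f 0 - 1)
          else f i * (f 0 + f 1 - 2)) ≤ f i * ∑ j ∈ Finset.range i, f j := by
      intro i _
      rcases Nat.lt_or_ge i 2 with hi | hi
      · interval_cases i
        · simp
        · norm_num [Finset.sum_range_one]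
          calc f 1 + f 1 * (f 0 - 1) = f 1 * (1 + (f 0 - 1)) := by ring
            _ = f 1 * f 0 := by congr 1; omega
            _ ≤ f 1 * f 0 := le_rfl
      · rw [if_neg (by omega), if_neg (by omega)]
        rcases Nat.eq_zero_or_pos (f i) with h0 | hpos
        · simp [h0]
        · have hS : f 0 + f 1 + (i - 2) ≤ ∑ j ∈ Finset.range i, f j := by
            have h2 : ∑ j ∈ Finset.range i, f j =
                f 0 + f 1 + ∑ j ∈ Finset.Ico 2 i, f j := by
              rw [Finset.range_eq_Ico,
                ← Finset.sum_Ico_consecutive f (by omega : 0 ≤ 2) (by omega : 2 ≤ i),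
                ← Finset.range_eq_Ico, Finset.sum_range_succ, Finset.sum_range_one]
            rw [h2]
            have : i - 2 = ∑ _j ∈ Finset.Ico 2 i, 1 := by
              simp [Nat.card_Ico]
            rw [this]
            gcongr with j hj
            simp only [Finset.mem_Ico] at hj
            exact le_trans hpos (μ.rowLen_anti j i (by omega))
          calc i * f i + f i * (f 0 + f 1 - 2)
              = f i * (i + (f 0 + f 1 - 2)) := by ring
            _ ≤ f i * (f 0 + f 1 + (i - 2)) := by
                apply Nat.mul_le_mul_left; omega
            _ ≤ f i * ∑ j ∈ Finset.range i, f j := Nat.mul_le_mul_left _ hS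
    have hle := Finset.sum_le_sum key
    rw [Finset.sum_add_distrib] at hle
    have hite : ∑ i ∈ Finset.range n, (if i = 0 then 0 else if i = 1 then f 1 * (f 0 - 1)
        else f i * (f 0 + f 1 - 2)) = C := by
      rw [hsplit (fun i => if i = 0 then 0 else if i = 1 then f 1 * (f 0 - 1)
        else f i * (f 0 + f 1 - 2))]
      have hIco : ∀ i ∈ Finset.Ico 2 n, (if i = 0 then 0 else if i = 1 then f 1 * (f 0 - 1)
          else f i * (f 0 + f 1 - 2)) = (f 0 + f 1 - 2) * f i := by
        intro i hi
        simp only [Finset.mem_Ico] at hi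
        rw [if_neg (by omega), if_neg (by omega), mul_comm]
      rw [Finset.sum_congr rfl hIco, ← Finset.mul_sum]
      norm_num [hC, hR]
    rw [hite] at hle
    exact hle
  -- from a bound on C, conclude
  have main : ∀ k : ℕ, k ≤ C → bstat μ + bstat μ.transpose + k ≤ n.choose 2 := by
    intro k hk
    rw [Nat.choose_two_right, Nat.le_div_iff_mul_le (by omega : 0 < 2)]
    have hmul : n * (n - 1) + n = n * n := by
      cases n with
      | zero => rfl
      | succ m => rw [Nat.succ_sub_one]; ring
    rw [hb]
    linarith [hP, hsq, hT, hk, hmul]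
  refine ⟨main 4 ?_, fun hrect => main 6 ?_⟩
  · -- C ≥ 4
    obtain ⟨p, hp⟩ := Nat.exists_eq_add_of_le hf0
    obtain ⟨q, hq⟩ := Nat.exists_eq_add_of_le hf1
    have e1 : f 0 - 1 = p + 1 := by omega
    have e2 : f 0 + f 1 - 2 = p + q + 1 := by omega
    have hpqR : 3 ≤ p + q + R := by omega
    rw [hC, e1, e2, hq]
    have h1 : q ≤ q * (p + 1) := Nat.le_mul_of_pos_right q (by omega)
    have h2 : R ≤ (p + q + 1) * R := Nat.le_mul_of_pos_left R (by omega)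
    have h3 : (1 + q) * (p + 1) = (p + 1) + q * (p + 1) := by ring
    linarith
  · -- rectangle case : C ≥ 6
    obtain ⟨a, b, hb2, hab⟩ := hrect
    have hfa0 : f 0 = a := by rw [hab 0, if_pos (by omega)]
    have hfa1 : f 1 = a := by rw [hab 1, if_pos (by omega)]
    have ha2 : 2 ≤ a := hfa0 ▸ hf0
    rw [hC, hfa0, hfa1]
    rcases Nat.lt_or_ge b 3 with hb3 | hb3
    · -- b = 2, so R = 0 and n = 2a, hence a ≥ 3
      have hb2' : b = 2 := by omega
      have hR0 : R = 0 := by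
        rw [hR]
        refine Finset.sum_eq_zero fun i hi => ?_
        simp only [Finset.mem_Ico] at hi
        rw [hab i, if_neg (by omega)]
      have hna : n = 2 * a := by omega
      have ha3 : 3 ≤ a := by omega
      rw [hR0, mul_zero, add_zero]
      obtain ⟨t, ht⟩ := Nat.exists_eq_add_of_le ha3
      have e1 : a - 1 = t + 2 := by omega
      rw [e1, ht]
      have : (3 + t) * (t + 2) = t * t + 5 * t + 6 := by ring
      linarith [Nat.zero_le (t * t)]
    · -- b ≥ 3, so R ≥ a
      have hRa : a ≤ R := by
        rw [hR]
        have h2 : (2 : ℕ) ∈ Finset.Ico 2 n := by simp; omega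
        calc a = f 2 := by rw [hab 2, if_pos (by omega)]
          _ ≤ R := Finset.single_le_sum (f := f) (fun i _ => Nat.zero_le _) h2
      obtain ⟨s, hs⟩ := Nat.exists_eq_add_of_le ha2
      have e1 : a - 1 = s + 1 := by omega
      have e2 : a + a - 2 = 2 * s + 2 := by omega
      rw [hs] at hRa
      rw [e1, e2, hs]
      have h1 : (2 + s) * (s + 1) = s * s + 3 * s + 2 := by ring
      have h2 : (2 * s + 2) * (2 + s) ≤ (2 * s + 2) * R := Nat.mul_le_mul_left _ hRa
      have h3 : (2 * s + 2) * (2 + s) = 2 * (s * s) + 6 * s + 4 := by ring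
      linarith [Nat.zero_le (s * s)]
end

section
/- Let λ be a partition with λ_{i−1} = λ_i > λ_{i+1} + 1 and λ_{i+1} = λ_{i+2} (indices from 1, trailing zeros allowed), and let ν be obtained from λ by decreasing both λ_{i−1} and λ_i by 1 and increasing both λ_{i+1} and λ_{i+2} by 1. Then ν is a partition with the same number of odd columns as λ, and b(ν) = b(λ) + 4. -/
/-- Build a Young diagram from an antitone, eventually zero row-length function. -/
lemma exists_yd (f : ℕ → ℕ) (hstep : ∀ r, f (r + 1) ≤ f r) (N : ℕ)
    (hN : ∀ r, N ≤ r → f r = 0) : ∃ μ : YoungDiagram, ∀ r, μ.rowLen r = f r := by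
  have hanti : ∀ ⦃r s : ℕ⦄, r ≤ s → f s ≤ f r := fun r s h =>
    antitone_nat_of_succ_le hstep h
  have hlower : IsLowerSet (((Finset.range N ×ˢ Finset.range (f 0)).filter
      fun c => c.2 < f c.1 : Finset (ℕ × ℕ)) : Set (ℕ × ℕ)) := by
    intro x y hle hx
    simp only [Finset.coe_filter, Set.mem_setOf_eq, Finset.mem_product,
      Finset.mem_range] at hx ⊢
    obtain ⟨h1, h2⟩ := Prod.le_def.mp hle
    exact ⟨⟨lt_of_le_of_lt h1 hx.1.1, lt_of_le_of_lt h2 hx.1.2⟩,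
      lt_of_le_of_lt h2 (lt_of_lt_of_le hx.2 (hanti h1))⟩
  refine ⟨⟨_, hlower⟩, ?_⟩
  intro r
  have hmem : ∀ c, ((r, c) ∈ (⟨_, hlower⟩ : YoungDiagram)) ↔ c < f r := by
    intro c
    simp only [YoungDiagram.mem_mk, Finset.mem_filter, Finset.mem_product, Finset.mem_range]
    constructor
    · exact fun h => h.2
    · intro h
      have h0 : f r ≤ f 0 := hanti (Nat.zero_le r)
      have hrN : r < N := by
        by_contra hh
        rw [hN r (by omega)] at h; omega
      exact ⟨⟨hrN, by omega⟩, h⟩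
  have key : ∀ c, c < (⟨_, hlower⟩ : YoungDiagram).rowLen r ↔ c < f r := fun c => by
    rw [← YoungDiagram.mem_iff_lt_rowLen]; exact hmem c
  have k1 := key ((⟨_, hlower⟩ : YoungDiagram).rowLen r)
  have k2 := key (f r)
  omega

lemma colLen_eq' (μ : YoungDiagram) (j v : ℕ) (h : ∀ r, j < μ.rowLen r ↔ r < v) :
    μ.colLen j = v := by
  have h2 : ∀ r, r < μ.colLen j ↔ r < v := fun r => by
    rw [← YoungDiagram.mem_iff_lt_colLen, YoungDiagram.mem_iff_lt_rowLen, h]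
  have := h2 (μ.colLen j); have := h2 v; omega

lemma yd_card_eq (μ : YoungDiagram) (N : ℕ) (hN : μ.colLen 0 ≤ N) :
    μ.card = ∑ r ∈ Finset.range N, μ.rowLen r := by
  have hcells : μ.cells = (Finset.range N).biUnion (fun r => μ.row r) := by
    ext c
    simp only [Finset.mem_biUnion, Finset.mem_range, YoungDiagram.mem_row_iff]
    constructor
    · intro hc
      have hc' : (c.1, c.2) ∈ μ := by simpa [YoungDiagram.mem_cells] using hc
      have h0 : (c.1, 0) ∈ μ := μ.up_left_mem le_rfl (Nat.zero_le _) hc'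
      exact ⟨c.1, lt_of_lt_of_le (YoungDiagram.mem_iff_lt_colLen.mp h0) hN,
        by simpa [YoungDiagram.mem_cells] using hc, rfl⟩
    · rintro ⟨r, -, hc, -⟩
      simpa [YoungDiagram.mem_cells] using hc
  show μ.cells.card = _
  rw [hcells, Finset.card_biUnion]
  · exact Finset.sum_congr rfl fun r _ => (μ.rowLen_eq_card).symm
  · intro x _ y _ hxy
    simp only [Finset.disjoint_left, YoungDiagram.mem_row_iff]
    rintro a ⟨_, rfl⟩ ⟨_, h⟩
    exact hxy h


/-- The new row-length function after moving the vertical domino. -/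
def newLen (l : YoungDiagram) (i : ℕ) : ℕ → ℕ := fun r =>
  if i ≤ r ∧ r ≤ i + 1 then l.rowLen i - 1
  else if i + 2 ≤ r ∧ r ≤ i + 3 then l.rowLen (i + 2) + 1
  else l.rowLen r


/-- Moving a vertical domino: if `λ_i = λ_{i+1} > λ_{i+2} + 1` and
`λ_{i+2} = λ_{i+3}` (rows 0-indexed), the shape `ν` obtained by decreasing rows
`i, i+1` by one and increasing rows `i+2, i+3` by one is a Young diagram with the
same number of odd columns and `b(ν) = b(λ) + 4`. -/
theorem move_domino (l : YoungDiagram) (i : ℕ)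
    (h1 : l.rowLen i = l.rowLen (i + 1))
    (h2 : l.rowLen (i + 2) + 1 < l.rowLen (i + 1))
    (h3 : l.rowLen (i + 2) = l.rowLen (i + 3)) :
    ∃ ν : YoungDiagram,
      ν.rowLen i = l.rowLen i - 1 ∧
      ν.rowLen (i + 1) = l.rowLen (i + 1) - 1 ∧
      ν.rowLen (i + 2) = l.rowLen (i + 2) + 1 ∧
      ν.rowLen (i + 3) = l.rowLen (i + 3) + 1 ∧
      (∀ j, j < i ∨ i + 3 < j → ν.rowLen j = l.rowLen j) ∧
      oddCols ν = oddCols l ∧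
      bstat ν = bstat l + 4 := by
  have hzero : ∀ r, l.colLen 0 ≤ r → l.rowLen r = 0 := by
    intro r hr
    by_contra h
    have hm : (r, 0) ∈ l := YoungDiagram.mem_iff_lt_rowLen.mpr (by omega)
    have := YoungDiagram.mem_iff_lt_colLen.mp hm
    omega
  set N := l.colLen 0 + i + 4 with hNdef
  -- step antitonicity of newLen
  have hstep : ∀ r, newLen l i (r + 1) ≤ newLen l i r := by
    intro r
    simp only [newLen]
    by_cases hc1 : r + 1 < i
    · have hA := l.rowLen_anti r (r + 1) (Nat.le_succ r)
      split_ifs <;> omega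
    · by_cases hc2 : r + 1 = i
      · have hA := l.rowLen_anti r i (by omega)
        split_ifs <;> omega
      · by_cases hc3 : r ≤ i + 2
        · split_ifs <;> omega
        · by_cases hc4 : r = i + 3
          · have hA := l.rowLen_anti (i + 2) (r + 1) (by omega)
            split_ifs <;> omega
          · have hA := l.rowLen_anti r (r + 1) (Nat.le_succ r)
            split_ifs <;> omega
  have hNzero : ∀ r, N ≤ r → newLen l i r = 0 := by
    intro r hr
    simp only [newLen]
    rw [if_neg (by omega), if_neg (by omega)]
    exact hzero r (by omega)
  obtain ⟨ν, hν⟩ := exists_yd (newLen l i) hstep N hNzero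
  -- the four changed rows
  have e2 : ν.rowLen i = l.rowLen i - 1 := by
    rw [hν]; simp only [newLen]; rw [if_pos (by omega)]
  have e3 : ν.rowLen (i + 1) = l.rowLen i - 1 := by
    rw [hν]; simp only [newLen]; rw [if_pos (by omega)]
  have e4 : ν.rowLen (i + 2) = l.rowLen (i + 2) + 1 := by
    rw [hν]; simp only [newLen]; rw [if_neg (by omega), if_pos (by omega)]
  have e5 : ν.rowLen (i + 3) = l.rowLen (i + 3) + 1 := by
    rw [hν]; simp only [newLen]; rw [if_neg (by omega), if_pos (by omega), h3]
  -- colLen of ν bounded by N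
  have hνcol : ν.colLen 0 ≤ N := by
    by_contra h
    have hm : (N, 0) ∈ ν := YoungDiagram.mem_iff_lt_colLen.mpr (by omega)
    have := YoungDiagram.mem_iff_lt_rowLen.mp hm
    rw [hν, hNzero N le_rfl] at this
    omega
  -- sum splitting helper
  have hsplit : ∀ (g : ℕ → ℕ) (M : ℕ), i + 4 ≤ M →
      ∑ r ∈ Finset.range M, g r =
      (∑ r ∈ Finset.range M \ {i, i + 1, i + 2, i + 3}, g r) +
      (g i + g (i + 1) + g (i + 2) + g (i + 3)) := by
    intro g M hM
    have hsub : ({i, i + 1, i + 2, i + 3} : Finset ℕ) ⊆ Finset.range M := by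
      intro x hx
      simp only [Finset.mem_insert, Finset.mem_singleton] at hx
      simp only [Finset.mem_range]
      omega
    rw [← Finset.sum_sdiff hsub]
    congr 1
    rw [show ({i, i + 1, i + 2, i + 3} : Finset ℕ) =
        insert i (insert (i + 1) (insert (i + 2) {i + 3})) from rfl]
    rw [Finset.sum_insert (by simp only [Finset.mem_insert, Finset.mem_singleton]; omega), Finset.sum_insert (by simp only [Finset.mem_insert, Finset.mem_singleton]; omega),
      Finset.sum_insert (by simp only [Finset.mem_insert, Finset.mem_singleton]; omega), Finset.sum_singleton]
    ring
  -- sums off the four rows agree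
  have hoff : ∀ (w : ℕ → ℕ) (M : ℕ),
      ∑ r ∈ Finset.range M \ {i, i + 1, i + 2, i + 3}, w r * ν.rowLen r =
      ∑ r ∈ Finset.range M \ {i, i + 1, i + 2, i + 3}, w r * l.rowLen r := by
    intro w M
    refine Finset.sum_congr rfl fun r hr => ?_
    simp only [Finset.mem_sdiff, Finset.mem_range, Finset.mem_insert,
      Finset.mem_singleton] at hr
    rw [hν]; simp only [newLen]
    rw [if_neg (by omega), if_neg (by omega)]
  -- cards agree
  have hcard : ν.card = l.card := by
    rw [yd_card_eq ν N hνcol, yd_card_eq l N (by omega),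
      hsplit (fun r => ν.rowLen r) N (by omega), hsplit (fun r => l.rowLen r) N (by omega)]
    have := hoff (fun _ => 1) N
    simp only [one_mul] at this
    rw [this, e2, e3, e4, e5]
    omega
  -- card is big enough
  have hi4 : i + 4 ≤ l.card := by
    have hs1 : ∑ r ∈ Finset.range (i + 2), 2 ≤ ∑ r ∈ Finset.range (i + 2), l.rowLen r := by
      refine Finset.sum_le_sum fun r hr => ?_
      simp only [Finset.mem_range] at hr
      have := l.rowLen_anti r (i + 1) (by omega)
      omega
    have hs2 : ∑ r ∈ Finset.range (i + 2), l.rowLen r ≤ ∑ r ∈ Finset.range N, l.rowLen r :=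
      Finset.sum_le_sum_of_subset (Finset.range_subset_range.mpr (by omega))
    have hs3 := yd_card_eq l N (by omega)
    simp only [Finset.sum_const, Finset.card_range, smul_eq_mul] at hs1
    omega
  -- parity of every column is preserved
  have parity : ∀ j, Odd (ν.colLen j) ↔ Odd (l.colLen j) := by
    intro j
    by_cases hj2 : j = l.rowLen (i + 2)
    · subst hj2
      have c1 : ν.colLen (l.rowLen (i + 2)) = i + 4 := by
        refine colLen_eq' _ _ _ fun r => ?_
        rw [hν]; simp only [newLen]
        rcases le_or_gt r (i + 1) with hr | hr
        · have hA := l.rowLen_anti r (i + 1) hr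
          split_ifs <;> omega
        · have hA := l.rowLen_anti (i + 2) r hr
          split_ifs <;> omega
      have c2 : l.colLen (l.rowLen (i + 2)) = i + 2 := by
        refine colLen_eq' _ _ _ fun r => ?_
        rcases le_or_gt r (i + 1) with hr | hr
        · have hA := l.rowLen_anti r (i + 1) hr
          omega
        · have hA := l.rowLen_anti (i + 2) r hr
          omega
      rw [c1, c2, Nat.odd_iff, Nat.odd_iff]; omega
    · by_cases hj1 : j = l.rowLen i - 1
      · subst hj1
        have c1 : ν.colLen (l.rowLen i - 1) = i := by
          refine colLen_eq' _ _ _ fun r => ?_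
          rw [hν]; simp only [newLen]
          rcases le_or_gt r (i + 1) with hr | hr
          · have hA := l.rowLen_anti r (i + 1) hr
            split_ifs <;> omega
          · have hA := l.rowLen_anti (i + 2) r hr
            split_ifs <;> omega
        have c2 : l.colLen (l.rowLen i - 1) = i + 2 := by
          refine colLen_eq' _ _ _ fun r => ?_
          rcases le_or_gt r (i + 1) with hr | hr
          · have hA := l.rowLen_anti r (i + 1) hr
            omega
          · have hA := l.rowLen_anti (i + 2) r hr
            omega
        rw [c1, c2, Nat.odd_iff, Nat.odd_iff]; omega
      · have hceq : ν.colLen j = l.colLen j := by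
          have key : ∀ r, r < ν.colLen j ↔ r < l.colLen j := by
            intro r
            rw [← YoungDiagram.mem_iff_lt_colLen, ← YoungDiagram.mem_iff_lt_colLen,
              YoungDiagram.mem_iff_lt_rowLen, YoungDiagram.mem_iff_lt_rowLen, hν]
            simp only [newLen]
            rcases lt_or_ge r i with hr | hr
            · split_ifs <;> omega
            · rcases le_or_gt r (i + 1) with hr2 | hr2
              · have hA := l.rowLen_anti i r hr
                have hB := l.rowLen_anti r (i + 1) hr2
                split_ifs <;> omega
              · rcases le_or_gt r (i + 3) with hr3 | hr3
                · have hA := l.rowLen_anti (i + 2) r (by omega)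
                  have hB := l.rowLen_anti r (i + 3) hr3
                  split_ifs <;> omega
                · have hA := l.rowLen_anti (i + 2) r (by omega)
                  split_ifs <;> omega
          have k1 := key (ν.colLen j)
          have k2 := key (l.colLen j)
          omega
        rw [hceq]
  refine ⟨ν, e2, by rw [e3, h1], e4, by rw [e5], ?_, ?_, ?_⟩
  · intro j hj
    rw [hν]; simp only [newLen]
    rw [if_neg (by omega), if_neg (by omega)]
  · rw [oddCols, oddCols, hcard]
    congr 1
    refine Finset.filter_congr fun j _ => ?_
    simp only [parity j]
  · rw [bstat, bstat, hcard,
      hsplit (fun r => r * ν.rowLen r) l.card hi4,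
      hsplit (fun r => r * l.rowLen r) l.card hi4, hoff]
    rw [e2, e3, e4, e5, ← h3, ← h1] at *
    obtain ⟨c, hc⟩ : ∃ c, l.rowLen i = c + 1 := ⟨l.rowLen i - 1, by omega⟩
    rw [hc]
    simp only [Nat.add_sub_cancel]
    ring
end
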